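/- arXiv:1511.00272 — 7 statements merged into one kernel-verified Lean document; each statement's English description precedes it below -/
import Mathlib

section
/- The number of $t$-subsets $\{i_1 < i_2 < \cdots < i_t\}$ of $\{1,2,\ldots,n\}$ satisfying $i_j \geq 2j$ for all $j = 1, \ldots, t$ equals $\binom{n}{t} - \binom{n}{t-1}$, provided $t \leq n/2$. -/
/-! Split the full-rank `t`-subsets of `{1, …, n + 1}` according to whether they contain
`n + 1`. Those that do not are the full-rank `t`-subsets of `{1, …, n}`; those that do are
obtained from the full-rank `(t - 1)`-subsets of `{1, …, n}` by adjoining `n + 1` as new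
largest element, which is allowed exactly when `2 * t ≤ n + 1`. So the count obeys Pascal's
recurrence, as does `C(n, t) - C(n, t - 1)`, and on the boundary `n = 2 * t - 1` both vanish
because `C(2t - 1, t) = C(2t - 1, t - 1)`. -/

/-- Binomial coefficient with integer lower index, zero when the lower index is negative. -/
def ichoose (n : ℕ) (j : ℤ) : ℤ := if 0 ≤ j then (n.choose j.toNat : ℤ) else 0

/-- The list of elements of a subset of `Fin n`, in increasing order, renumbered as
elements of `{1, …, n}`. -/
def sortedVals {n : ℕ} (s : Finset (Fin n)) : List ℕ :=
  (s.sort (· ≤ ·)).map (fun i => (i : ℕ) + 1)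

/-- A `t`-subset `{i₁ < i₂ < ⋯ < i_t}` of `{1, …, n}` has rank `t` iff `i_j ≥ 2j` for all `j`. -/
def IsFullRank {n : ℕ} (s : Finset (Fin n)) : Prop :=
  ∀ j < s.card, 2 * (j + 1) ≤ (sortedVals s).getD j 0

open Finset

lemma ichoose_natCast (n k : ℕ) : ichoose n k = n.choose k := by
  simp [ichoose]

lemma ichoose_succ (n : ℕ) (j : ℤ) : ichoose (n + 1) j = ichoose n j + ichoose n (j - 1) := by
  rcases j with (_ | k) | k
  · simp [ichoose]
  · have hk : (0 : ℤ) ≤ k + 1 := by omega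
    simp [ichoose, Nat.choose_succ_succ, add_comm, hk]
  · simp [ichoose]

lemma Finset.sort_insert_of_forall_lt {α : Type*} [LinearOrder α] {s : Finset α} {a : α}
    (h : ∀ b ∈ s, b < a) : (insert a s).sort = s.sort ++ [a] := by
  have hnd : (s.sort ++ [a]).Nodup := by
    simpa [List.nodup_append] using fun b hb => (h b hb).ne
  rw [← (List.toFinset_sort (· ≤ ·) hnd).2]
  · simp
  · simpa [List.pairwise_append] using fun b hb => (h b hb).le

lemma List.forall_lt_length_getD_append_singleton {α : Type*} (P : ℕ → α → Prop) (l : List α)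
    (x d : α) :
    (∀ j < l.length + 1, P j ((l ++ [x]).getD j d)) ↔
      (∀ j < l.length, P j (l.getD j d)) ∧ P l.length x := by
  simp only [Nat.lt_succ_iff_lt_or_eq, or_imp, forall_and, forall_eq]
  grind

instance {n : ℕ} : DecidablePred (@IsFullRank n) := fun s => by
  unfold IsFullRank; infer_instance

section
variable {n : ℕ}

/- `sortedVals` coerces the sorted list to `List ℕ` (through the list monad) before mapping, so
it is not syntactically a map over `Fin n`. -/
lemma sortedVals_eq_map_sort (s : Finset (Fin n)) :
    sortedVals s = s.sort.map (fun i : Fin n => (i : ℕ) + 1) := by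
  simp [sortedVals, ← List.map_eq_flatMap]

lemma length_sortedVals (s : Finset (Fin n)) : (sortedVals s).length = #s := by
  simp [sortedVals_eq_map_sort]

lemma le_of_mem_sortedVals {s : Finset (Fin n)} {x : ℕ} (hx : x ∈ sortedVals s) : x ≤ n := by
  rw [sortedVals_eq_map_sort] at hx
  obtain ⟨i, -, rfl⟩ := List.mem_map.1 hx
  exact i.isLt

lemma sortedVals_map_castSucc (s : Finset (Fin n)) :
    sortedVals (s.map Fin.castSuccEmb) = sortedVals s := by
  rw [sortedVals_eq_map_sort, sortedVals_eq_map_sort,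
    ← map_sort _ _ _ _ fun a _ b _ => Fin.castSucc_le_castSucc_iff.symm, List.map_map]
  rfl

lemma sortedVals_insert_last_map_castSucc (s : Finset (Fin n)) :
    sortedVals (insert (Fin.last n) (s.map Fin.castSuccEmb)) = sortedVals s ++ [n + 1] := by
  rw [sortedVals_eq_map_sort, sort_insert_of_forall_lt (by simp [Fin.castSucc_lt_last]),
    List.map_append, ← sortedVals_eq_map_sort, sortedVals_map_castSucc]
  simp

lemma IsFullRank.two_mul_card_le {s : Finset (Fin n)} (hs : IsFullRank s) : 2 * #s ≤ n := by
  obtain h | h := Nat.eq_zero_or_pos #s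
  · simp [h]
  have hlen : #s - 1 < (sortedVals s).length := by rw [length_sortedVals]; omega
  have := hs (#s - 1) (by omega)
  rw [List.getD_eq_getElem _ _ hlen] at this
  have := le_of_mem_sortedVals (List.getElem_mem hlen)
  omega

lemma isFullRank_map_castSucc (s : Finset (Fin n)) :
    IsFullRank (s.map Fin.castSuccEmb) ↔ IsFullRank s := by
  rw [IsFullRank, IsFullRank, sortedVals_map_castSucc, card_map]

lemma isFullRank_insert_last_map_castSucc (s : Finset (Fin n)) :
    IsFullRank (insert (Fin.last n) (s.map Fin.castSuccEmb)) ↔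
      IsFullRank s ∧ 2 * (#s + 1) ≤ n + 1 := by
  rw [IsFullRank, IsFullRank, sortedVals_insert_last_map_castSucc,
    card_insert_of_notMem (by simp [Fin.castSucc_ne_last]), card_map, ← length_sortedVals,
    List.forall_lt_length_getD_append_singleton (fun j x => 2 * (j + 1) ≤ x)]

end

def fullRankSets (n t : ℕ) : Finset (Finset (Fin n)) := {s ∈ powersetCard t univ | IsFullRank s}

lemma natCard_eq_card_fullRankSets (n t : ℕ) :
    Nat.card {s : Finset (Fin n) // #s = t ∧ IsFullRank s} = #(fullRankSets n t) := by
  rw [Nat.card_eq_fintype_card, Fintype.card_subtype, fullRankSets]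
  congr 1
  ext s
  simp [mem_powersetCard]

lemma fullRankSets_zero (n : ℕ) : fullRankSets n 0 = {∅} := by
  ext s
  simp only [fullRankSets, mem_filter, mem_powersetCard_univ, card_eq_zero, mem_singleton,
    and_iff_left_iff_imp]
  rintro rfl
  simp [IsFullRank]

lemma fullRankSets_eq_empty {n t : ℕ} (h : n < 2 * t) : fullRankSets n t = ∅ := by
  refine filter_eq_empty_iff.2 fun s hs hfr => ?_
  have := hfr.two_mul_card_le
  rw [(mem_powersetCard.1 hs).2] at this
  omega

lemma Fin.powersetCard_succ_univ (n k : ℕ) :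
    powersetCard (k + 1) (univ : Finset (Fin (n + 1))) =
      (powersetCard (k + 1) univ).map (mapEmbedding Fin.castSuccEmb).toEmbedding ∪
        ((powersetCard k univ).map (mapEmbedding Fin.castSuccEmb).toEmbedding).image
          (insert (Fin.last n)) := by
  rw [Fin.univ_castSuccEmb, cons_eq_insert, powersetCard_succ_insert (by simp), powersetCard_map,
    powersetCard_map]

lemma card_fullRankSets_succ {n u : ℕ} (h : 2 * (u + 1) ≤ n + 1) :
    #(fullRankSets (n + 1) (u + 1)) = #(fullRankSets n (u + 1)) + #(fullRankSets n u) := by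
  have hlast (s : Finset (Fin n)) : Fin.last n ∉ s.map Fin.castSuccEmb := by
    simp [Fin.castSucc_ne_last]
  simp only [fullRankSets]
  rw [Fin.powersetCard_succ_univ, filter_union, card_union_of_disjoint (disjoint_filter_filter ?_),
    filter_map, card_map, filter_image, card_image_of_injOn, filter_map, card_map]
  · congr 2 <;> refine filter_congr fun s hs => ?_ <;>
      simp only [Function.comp_apply, RelEmbedding.coe_toEmbedding, mapEmbedding_apply]
    · exact isFullRank_map_castSucc s
    · rw [isFullRank_insert_last_map_castSucc, (mem_powersetCard.1 hs).2]
      exact and_iff_left h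
  · refine insert_erase_invOn.2.injOn.mono fun _ hs => ?_
    obtain ⟨s, -, rfl⟩ := mem_map.1 (mem_filter.1 hs).1
    exact hlast s
  · refine disjoint_left.2 ?_
    simp only [mem_map, mem_image, RelEmbedding.coe_toEmbedding, mapEmbedding_apply]
    rintro _ ⟨s, -, rfl⟩ ⟨_, ⟨t, -, rfl⟩, hts⟩
    exact hlast s (hts ▸ mem_insert_self _ _)

/- The bound `2 * t ≤ n + 1` (rather than `2 * t ≤ n`) is what the induction needs: the
recursion at `n + 1 = 2 * t` calls the case `n = 2 * t - 1`, where both sides vanish. -/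
lemma card_fullRankSets (n t : ℕ) (h : 2 * t ≤ n + 1) :
    (#(fullRankSets n t) : ℤ) = ichoose n t - ichoose n (t - 1) := by
  induction n generalizing t with
  | zero =>
    obtain rfl : t = 0 := by omega
    simp [fullRankSets_zero, ichoose]
  | succ n ih =>
    obtain _ | u := t
    · simp [fullRankSets_zero, ichoose]
    push_cast
    rw [add_sub_cancel_right]
    obtain hu | hu := le_or_gt (2 * (u + 1)) (n + 1)
    · rw [card_fullRankSets_succ hu, ichoose_succ, ichoose_succ, Nat.cast_add, ih _ hu,
        ih _ (by omega)]
      push_cast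
      rw [add_sub_cancel_right]
      ring
    · obtain rfl : n = 2 * u := by omega
      rw [fullRankSets_eq_empty (by omega), ← Nat.cast_succ, ichoose_natCast, ichoose_natCast,
        Nat.choose_symm_half]
      simp

theorem stmt0 (n t : ℕ) (h : 2 * t ≤ n) :
    (Nat.card {s : Finset (Fin n) // s.card = t ∧ IsFullRank s} : ℤ) =
      ichoose n (t : ℤ) - ichoose n ((t : ℤ) - 1) := by
  rw [natCard_eq_card_fullRankSets]
  exact card_fullRankSets n t (by omega)
end

section
/- If $n$ is odd, then the determinant of the adjacency matrix of the $n$-cube graph $Q_n$ is an odd integer. -/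
/-- The adjacency matrix of the `n`-cube graph `Qₙ`: vertices are elements of `{0,1}ⁿ`,
two vertices are adjacent iff they differ in exactly one coordinate. -/
def cubeAdj (n : ℕ) : Matrix (Fin n → Bool) (Fin n → Bool) ℤ :=
  fun u v => if (Finset.univ.filter fun i => u i ≠ v i).card = 1 then 1 else 0

namespace CubeAux

variable {n : ℕ}

/-- Flip the `i`-th coordinate. -/
def flip (i : Fin n) (u : Fin n → Bool) : Fin n → Bool :=
  Function.update u i (!u i)

lemma flip_flip (i : Fin n) (u : Fin n → Bool) : flip i (flip i u) = u := by
  funext j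
  by_cases h : j = i
  · subst h; simp [flip]
  · simp [flip, Function.update_of_ne h]

lemma flip_comm (i j : Fin n) (u : Fin n → Bool) :
    flip i (flip j u) = flip j (flip i u) := by
  by_cases h : i = j
  · subst h; rfl
  · funext k
    by_cases hk : k = i
    · subst hk
      simp [flip, Function.update_of_ne h, Function.update_of_ne (Ne.symm h)]
    · by_cases hk' : k = j
      · subst hk'
        simp [flip, Function.update_of_ne h, Function.update_of_ne (Ne.symm h),
          Function.update_of_ne hk]
      · simp [flip, Function.update_of_ne hk, Function.update_of_ne hk']

lemma eq_flip_iff (i : Fin n) (u v : Fin n → Bool) :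
    v = flip i u ↔ (Finset.univ.filter fun j => u j ≠ v j) = {i} := by
  constructor
  · rintro rfl
    ext j
    simp only [Finset.mem_filter, Finset.mem_univ, true_and, Finset.mem_singleton]
    by_cases h : j = i
    · subst h; simp [flip]
    · simp [flip, Function.update_of_ne h, h]
  · intro h
    funext j
    by_cases hj : j = i
    · subst hj
      have : j ∈ Finset.univ.filter fun k => u k ≠ v k := by
        rw [h]; exact Finset.mem_singleton_self j
      have hne : u j ≠ v j := (Finset.mem_filter.mp this).2
      simp only [flip, Function.update_self]
      cases hu : u j <;> cases hv : v j <;> simp_all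
    · have : j ∉ Finset.univ.filter fun k => u k ≠ v k := by
        rw [h]; simp [hj]
      have heq : u j = v j := by
        by_contra hne
        exact this (Finset.mem_filter.mpr ⟨Finset.mem_univ _, hne⟩)
      simp [flip, Function.update_of_ne hj, heq]

/-- The permutation matrix of `flip i`, over `ZMod 2`. -/
def P (i : Fin n) : Matrix (Fin n → Bool) (Fin n → Bool) (ZMod 2) :=
  fun u v => if v = flip i u then 1 else 0

lemma P_mul_P (i j : Fin n) :
    P i * P j = fun u v => if v = flip j (flip i u) then 1 else 0 := by
  funext u v
  simp only [Matrix.mul_apply, P]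
  rw [Finset.sum_eq_single (flip i u)]
  · simp
  · intro w _ hw; simp [hw, Ne.symm hw]
  · intro h; exact absurd (Finset.mem_univ _) h

lemma P_mul_P_self (i : Fin n) : P i * P i = 1 := by
  rw [P_mul_P]
  funext u v
  simp [flip_flip, Matrix.one_apply, eq_comm]

lemma map_eq_sum_P (n : ℕ) :
    (cubeAdj n).map (Int.cast : ℤ → ZMod 2) = ∑ i, P i := by
  funext u v
  have hsum : (∑ i, P i) u v = ∑ i, (if v = flip i u then (1 : ZMod 2) else 0) := by
    simp only [Matrix.sum_apply, P]
  rw [hsum]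
  simp only [Matrix.map_apply, cubeAdj]
  by_cases h : (Finset.univ.filter fun i => u i ≠ v i).card = 1
  · obtain ⟨a, ha⟩ := Finset.card_eq_one.mp h
    rw [if_pos h]
    rw [Finset.sum_eq_single a]
    · rw [if_pos ((eq_flip_iff a u v).mpr ha)]; simp
    · intro i _ hi
      rw [if_neg]
      intro hv
      have := (eq_flip_iff i u v).mp hv
      rw [ha] at this
      have ha' : a = i := by simpa using this
      exact hi ha'.symm
    · intro h'; exact absurd (Finset.mem_univ _) h'
  · rw [if_neg h]
    rw [Finset.sum_eq_zero]
    · simp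
    intro i _
    rw [if_neg]
    intro hv
    have := (eq_flip_iff i u v).mp hv
    rw [this] at h
    simp at h

lemma sq_eq_one (hn : Odd n) :
    ((cubeAdj n).map (Int.cast : ℤ → ZMod 2)) *
      ((cubeAdj n).map (Int.cast : ℤ → ZMod 2)) = 1 := by
  rw [map_eq_sum_P]
  rw [Finset.sum_mul_sum]
  have hsplit :
      ∑ i : Fin n, ∑ j : Fin n, P i * P j
        = ∑ p ∈ (Finset.univ : Finset (Fin n)).diag, P p.1 * P p.2
          + ∑ p ∈ (Finset.univ : Finset (Fin n)).offDiag, P p.1 * P p.2 := by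
    rw [← Finset.sum_product']
    rw [← Finset.diag_union_offDiag (Finset.univ : Finset (Fin n))]
    rw [Finset.sum_union (Finset.disjoint_diag_offDiag _)]
  rw [hsplit]
  have hoff : ∑ p ∈ (Finset.univ : Finset (Fin n)).offDiag, P p.1 * P p.2 = 0 := by
    apply Finset.sum_involution (fun p _ => (p.2, p.1))
    · intro p _
      show P p.1 * P p.2 + P p.2 * P p.1 = 0
      rw [P_mul_P, P_mul_P]
      funext u v
      simp only [Matrix.add_apply, flip_comm p.1 p.2, Matrix.zero_apply]
      exact CharTwo.add_self_eq_zero _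
    · intro p hp _ h
      exact (Finset.mem_offDiag.mp hp).2.2 (congrArg Prod.fst h).symm
    · intro p hp
      rw [Finset.mem_offDiag] at hp ⊢
      exact ⟨hp.2.1, hp.1, fun h => hp.2.2 h.symm⟩
    · intro p _; rfl
  rw [hoff, add_zero]
  have hdiag : ∑ p ∈ (Finset.univ : Finset (Fin n)).diag, P p.1 * P p.2
      = ∑ i : Fin n, (1 : Matrix (Fin n → Bool) (Fin n → Bool) (ZMod 2)) := by
    rw [Finset.sum_diag]
    exact Finset.sum_congr rfl fun i _ => P_mul_P_self i
  rw [hdiag, Finset.sum_const, Finset.card_univ, Fintype.card_fin]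
  have h2 : (n : ZMod 2) = 1 := by
    obtain ⟨k, rfl⟩ := hn
    push_cast
    ring_nf
    simp [CharTwo.two_eq_zero]
  calc n • (1 : Matrix (Fin n → Bool) (Fin n → Bool) (ZMod 2))
      = (n : ZMod 2) • 1 := by rw [← Nat.cast_smul_eq_nsmul (ZMod 2)]
    _ = 1 := by rw [h2, one_smul]

end CubeAux

theorem stmt3 (n : ℕ) (hn : Odd n) : Odd (cubeAdj n).det := by
  have hdet : ((cubeAdj n).det : ZMod 2) * ((cubeAdj n).det : ZMod 2) = 1 := by
    have := CubeAux.sq_eq_one (n := n) hn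
    have h := congrArg Matrix.det this
    rw [Matrix.det_mul, Matrix.det_one] at h
    have hcast : ((cubeAdj n).map (Int.cast : ℤ → ZMod 2)).det
        = ((cubeAdj n).det : ZMod 2) :=
      (RingHom.map_det (Int.castRingHom (ZMod 2)) (cubeAdj n)).symm
    rw [hcast] at h
    exact h
  have h1 : ((cubeAdj n).det : ZMod 2) = 1 := by
    have : ∀ a : ZMod 2, a * a = 1 → a = 1 := by decide
    exact this _ hdet
  rw [Int.not_even_iff_odd.symm]
  intro heven
  obtain ⟨r, hr⟩ := heven
  have hdvd : (2 : ℤ) ∣ (cubeAdj n).det := ⟨r, by omega⟩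
  have := (ZMod.intCast_zmod_eq_zero_iff_dvd (cubeAdj n).det 2).mpr hdvd
  rw [h1] at this
  exact one_ne_zero this
end

section
/- If $n = 2m$ is even, then the kernel of the adjacency matrix of $Q_n$ over $\mathbb{Q}$ has dimension $\binom{n}{m}$. -/
/-!
The characters `u ↦ (-1) ^ #{i | u i ∧ S i}` of `(ℤ/2)ⁿ`, indexed by `S : Fin n → Bool`, are
eigenvectors of the adjacency matrix of `Qₙ` with eigenvalue `n - 2 #{i | S i}`: flipping one
coordinate `i` of `u` multiplies the character by `±1` according to `S i`. Assembled as the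
columns of the Walsh–Hadamard matrix `H`, which satisfies `H * H = 2ⁿ • 1` and is therefore
invertible over `ℚ`, they conjugate `A` to a diagonal matrix. Hence the nullity of `A` is the
number of `S` with `n = 2 #{i | S i}`, that is, `n.choose m`.
-/

open Finset

namespace Matrix

variable {K n : Type*} [Field K] [Fintype n]

lemma rank_add_finrank_ker_mulVecLin {m : Type*} (A : Matrix m n K) :
    A.rank + Module.finrank K (LinearMap.ker A.mulVecLin) = Fintype.card n := by
  rw [Matrix.rank, LinearMap.finrank_range_add_finrank_ker, Module.finrank_fintype_fun_eq_card]

variable [DecidableEq n]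

lemma finrank_ker_mulVecLin_diagonal [DecidableEq K] (d : n → K) :
    Module.finrank K (LinearMap.ker (diagonal d).mulVecLin) = Fintype.card {i // d i = 0} := by
  have hsum := rank_add_finrank_ker_mulVecLin (diagonal d)
  rw [rank_diagonal, Fintype.card_subtype_compl] at hsum
  have hle := Fintype.card_subtype_le fun i => d i = 0
  omega

lemma finrank_ker_mulVecLin_eq_of_mul_eq_mul {A P D : Matrix n n K} (hP : IsUnit P.det)
    (h : A * P = P * D) :
    Module.finrank K (LinearMap.ker A.mulVecLin) =
      Module.finrank K (LinearMap.ker D.mulVecLin) := by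
  have hrank : A.rank = D.rank := by
    rw [← rank_mul_eq_left_of_isUnit_det P A hP, h, rank_mul_eq_right_of_isUnit_det P D hP]
  have hA := rank_add_finrank_ker_mulVecLin A
  have hD := rank_add_finrank_ker_mulVecLin D
  omega

end Matrix

lemma Fintype.card_bool_fun_card_filter_eq (ι : Type*) [Fintype ι] [DecidableEq ι] (k : ℕ) :
    Fintype.card {S : ι → Bool // #{i | S i} = k} = (Fintype.card ι).choose k := by
  let e : {S : ι → Bool // #{i | S i} = k} ≃ {s : Finset ι // #s = k} :=
    { toFun S := ⟨({i | S.1 i} : Finset ι), S.2⟩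
      invFun s := ⟨fun i => i ∈ s.1, by simpa using s.2⟩
      left_inv S := by ext i; simp
      right_inv s := by ext i; simp }
  rw [Fintype.card_congr e, Fintype.card_finset_len]

namespace Hypercube

open Matrix

section Flip

variable {ι : Type*} [DecidableEq ι]

def flipBit (u : ι → Bool) (i : ι) : ι → Bool := Function.update u i (!u i)

lemma flipBit_injective (u : ι → Bool) : Function.Injective (flipBit u) := by
  intro i j hij
  by_contra hne
  have := congrFun hij i
  simp [flipBit, Function.update_of_ne hne] at this

variable [Fintype ι]

lemma hammingDist_flipBit (u : ι → Bool) (i : ι) : hammingDist u (flipBit u i) = 1 := by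
  rw [hammingDist, card_eq_one]
  refine ⟨i, ?_⟩
  ext j
  by_cases hj : j = i <;> simp [flipBit, Function.update_apply, hj]

lemma hammingDist_eq_one_iff {u v : ι → Bool} : hammingDist u v = 1 ↔ ∃ i, flipBit u i = v := by
  refine ⟨fun h => ?_, fun ⟨i, hi⟩ => hi ▸ hammingDist_flipBit u i⟩
  obtain ⟨i, hi⟩ := card_eq_one.mp h
  have hdiff (j : ι) : u j ≠ v j ↔ j = i := by simpa using Finset.ext_iff.mp hi j
  refine ⟨i, funext fun j => ?_⟩
  by_cases hj : j = i
  · subst hj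
    simpa [flipBit] using (Bool.eq_not_iff.mpr ((hdiff j).mpr rfl).symm).symm
  · simpa [flipBit, hj] using (hdiff j).not.mpr hj

lemma filter_hammingDist_eq_one (u : ι → Bool) :
    ({v | hammingDist u v = 1} : Finset (ι → Bool)) = univ.image (flipBit u) := by
  ext v
  simp [hammingDist_eq_one_iff]

end Flip

section Walsh

variable (R : Type*) [CommRing R] (ι : Type*) [Fintype ι]

def walshMatrix : Matrix (ι → Bool) (ι → Bool) R :=
  fun u S => ∏ i, if u i && S i then -1 else 1

lemma walshMatrix_mul_self [DecidableEq ι] :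
    walshMatrix R ι * walshMatrix R ι = (2 ^ Fintype.card ι : R) • 1 := by
  ext u v
  have hfactor (i : ι) :
      ∑ b : Bool, (if u i && b then (-1 : R) else 1) * (if b && v i then -1 else 1) =
        if u i = v i then 2 else 0 := by
    cases u i <;> cases v i <;> norm_num
  simp only [mul_apply, walshMatrix, ← prod_mul_distrib]
  -- `∑ S, ∏ i, f i (S i) = ∏ i, ∑ b, f i b`: the orthogonality relation factors coordinatewise.
  rw [← Fintype.prod_sum fun i b => (if u i && b then (-1 : R) else 1) *
    (if b && v i then -1 else 1), prod_congr rfl fun i _ => hfactor i]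
  by_cases huv : u = v
  · simp [huv]
  · obtain ⟨i, hi⟩ := Function.ne_iff.mp huv
    rw [prod_eq_zero (mem_univ i) (if_neg hi)]
    simp [huv]

lemma isUnit_det_walshMatrix [DecidableEq ι] (h2 : IsUnit (2 : R)) :
    IsUnit (walshMatrix R ι).det := by
  have hsq : (walshMatrix R ι).det * (walshMatrix R ι).det =
      (2 ^ Fintype.card ι) ^ Fintype.card (ι → Bool) := by
    rw [← det_mul, walshMatrix_mul_self, det_smul, det_one, mul_one]
  exact isUnit_of_mul_isUnit_left (hsq ▸ (h2.pow _).pow _)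

variable {R ι}

lemma walshMatrix_flipBit [DecidableEq ι] (u S : ι → Bool) (i : ι) :
    walshMatrix R ι (flipBit u i) S = (if S i then -1 else 1) * walshMatrix R ι u S := by
  simp only [walshMatrix, ← mul_prod_erase univ _ (mem_univ i), ← mul_assoc]
  congr 1
  · cases hu : u i <;> cases S i <;> simp [flipBit, hu]
  · exact prod_congr rfl fun j hj => by rw [flipBit, Function.update_of_ne (ne_of_mem_erase hj)]

variable (R) in
def cubeEigenvalue (S : ι → Bool) : R := Fintype.card ι - 2 * #{i | S i}

lemma sum_sign_eq_cubeEigenvalue (S : ι → Bool) :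
    ∑ i, (if S i then (-1 : R) else 1) = cubeEigenvalue R S := by
  have hsign (i : ι) : (if S i then (-1 : R) else 1) = 1 - 2 * if S i then 1 else 0 := by
    split_ifs <;> ring
  rw [sum_congr rfl fun i _ => hsign i, sum_sub_distrib, ← mul_sum, sum_boole]
  simp [cubeEigenvalue]

lemma cubeEigenvalue_eq_zero_iff [CharZero R] (S : ι → Bool) :
    cubeEigenvalue R S = 0 ↔ Fintype.card ι = 2 * #{i | S i} := by
  rw [cubeEigenvalue, sub_eq_zero]
  exact_mod_cast Iff.rfl

end Walsh

lemma cubeAdj_mul_walshMatrix (R : Type*) [CommRing R] (n : ℕ) :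
    (cubeAdj n).map ((↑) : ℤ → R) * walshMatrix R (Fin n) =
      walshMatrix R (Fin n) * diagonal (cubeEigenvalue R) := by
  ext u S
  have hadj (v : Fin n → Bool) :
      (cubeAdj n).map ((↑) : ℤ → R) u v = if hammingDist u v = 1 then 1 else 0 := by
    simp [cubeAdj, hammingDist]
  rw [mul_diagonal, mul_apply]
  simp only [hadj, ite_mul, one_mul, zero_mul]
  rw [← sum_filter, filter_hammingDist_eq_one, sum_image fun i _ j _ h => flipBit_injective u h]
  simp_rw [walshMatrix_flipBit]
  rw [← sum_mul, sum_sign_eq_cubeEigenvalue, mul_comm]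

end Hypercube

open Hypercube

theorem stmt5 (n m : ℕ) (h : n = 2 * m) :
    Module.finrank ℚ
      (LinearMap.ker (Matrix.mulVecLin ((cubeAdj n).map ((↑) : ℤ → ℚ)))) = n.choose m := by
  rw [Matrix.finrank_ker_mulVecLin_eq_of_mul_eq_mul
      (isUnit_det_walshMatrix ℚ (Fin n) (by norm_num)) (cubeAdj_mul_walshMatrix ℚ n),
    Matrix.finrank_ker_mulVecLin_diagonal]
  have hzero (S : Fin n → Bool) : cubeEigenvalue ℚ S = 0 ↔ #{i | S i} = m := by
    rw [cubeEigenvalue_eq_zero_iff, Fintype.card_fin]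
    omega
  rw [Fintype.card_congr (Equiv.subtypeEquivRight hzero), Fintype.card_bool_fun_card_filter_eq,
    Fintype.card_fin]
end

section
/- For $0 \leq t \leq k \leq n$ with $t + k \leq n$, the inclusion matrix $W_{t,k}$ (rows indexed by $t$-subsets, columns by $k$-subsets of an $n$-set, with entry 1 if the $t$-subset is contained in the $k$-subset) has rank $\binom{n}{t}$ over $\mathbb{Q}$. -/
open Finset Matrix

/-- Count of `k`-subsets `K ⊇ T` with `|K ∩ T'| = j`, when `|T ∩ T'| = i`. -/
def gottA (n t k i j : ℕ) : ℕ :=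
  if i ≤ j ∧ j ≤ k - t + i then
    (t - i).choose (j - i) * (n - 2 * t + i).choose (k - t + i - j)
  else 0

lemma gott_count {n t k : ℕ} (htk : t ≤ k) (h : t + k ≤ n)
    {T T' : Finset (Fin n)} (hT : T.card = t) (hT' : T'.card = t) (j : ℕ) :
    (univ.filter (fun K : {s : Finset (Fin n) // s.card = k} =>
        T ⊆ K.1 ∧ (K.1 ∩ T').card = j)).card = gottA n t k (T ∩ T').card j := by
  set i := (T ∩ T').card with hi
  have hit : i ≤ t := hT ▸ card_le_card inter_subset_left
  have h2tn : 2 * t ≤ n := by omega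
  by_cases hij : i ≤ j ∧ j ≤ k - t + i
  · obtain ⟨h1, h2⟩ := hij
    rw [gottA, if_pos ⟨h1, h2⟩]
    have hTdT : (T' \ T).card = t - i := by
      have := card_sdiff_add_card_inter T' T
      rw [inter_comm] at this
      omega
    have hcompl : ((T ∪ T')ᶜ : Finset (Fin n)).card = n - 2 * t + i := by
      have h3 := card_union_add_card_inter T T'
      have h4 : ((T ∪ T')ᶜ : Finset (Fin n)).card = n - (T ∪ T').card := by
        rw [card_compl, Fintype.card_fin]
      have h5 : (T ∪ T').card ≤ n := by
        simpa using card_le_univ (T ∪ T' : Finset (Fin n))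
      omega
    rw [← hTdT, ← hcompl, ← card_powersetCard, ← card_powersetCard, ← card_product]
    refine card_bij' (fun K _ => (K.1 ∩ (T' \ T), K.1 \ (T ∪ T')))
      (fun p hp => (⟨T ∪ p.1 ∪ p.2, by
        rw [mem_product, mem_powersetCard, mem_powersetCard] at hp
        obtain ⟨⟨hB, hBc⟩, hC, hCc⟩ := hp
        have hd1 : Disjoint T p.1 := by
          rw [Finset.disjoint_left]
          intro x hx hx2
          exact (mem_sdiff.1 (hB hx2)).2 hx
        have hd2 : Disjoint (T ∪ p.1) p.2 := by
          rw [Finset.disjoint_left]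
          intro x hx hx2
          have := mem_compl.1 (hC hx2)
          rcases mem_union.1 hx with h' | h'
          · exact this (mem_union.2 (Or.inl h'))
          · exact this (mem_union.2 (Or.inr (mem_sdiff.1 (hB h')).1))
        rw [card_union_of_disjoint hd2, card_union_of_disjoint hd1, hT, hBc, hCc]
        omega⟩ : {s : Finset (Fin n) // s.card = k})) ?fwd ?bwd ?linv ?rinv
    case fwd =>
      rintro K hK
      rw [mem_filter] at hK
      obtain ⟨-, hTK, hKj⟩ := hK
      rw [mem_product, mem_powersetCard, mem_powersetCard]
      dsimp only
      have e1 : K.1 ∩ (T' \ T) = (K.1 ∩ T') \ (T ∩ T') := by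
        ext x
        simp only [mem_inter, mem_sdiff, mem_inter]
        constructor
        · rintro ⟨h1, h2, h3⟩; exact ⟨⟨h1, h2⟩, fun hh => h3 hh.1⟩
        · rintro ⟨⟨h1, h2⟩, h3⟩; exact ⟨h1, h2, fun hh => h3 ⟨hh, h2⟩⟩
      have e2 : T ∩ T' ⊆ K.1 ∩ T' := fun x hx => by
        rcases mem_inter.1 hx with ⟨hx1, hx2⟩
        exact mem_inter.2 ⟨hTK hx1, hx2⟩
      have cB : (K.1 ∩ (T' \ T)).card = j - i := by
        rw [e1, card_sdiff_of_subset e2, hKj]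
      refine ⟨⟨inter_subset_right, cB⟩, ?_, ?_⟩
      · intro x hx
        rw [mem_compl]
        exact (mem_sdiff.1 hx).2
      · have e3 : K.1 ∩ (T ∪ T') = T ∪ (K.1 ∩ (T' \ T)) := by
          ext x
          simp only [mem_inter, mem_union, mem_sdiff]
          constructor
          · rintro ⟨h1, h2 | h2⟩
            · exact Or.inl h2
            · by_cases hxT : x ∈ T
              · exact Or.inl hxT
              · exact Or.inr ⟨h1, h2, hxT⟩
          · rintro (h1 | ⟨h1, h2, h3⟩)
            · exact ⟨hTK h1, Or.inl h1⟩
            · exact ⟨h1, Or.inr h2⟩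
        have hd : Disjoint T (K.1 ∩ (T' \ T)) := by
          rw [Finset.disjoint_left]
          intro x hx hx2
          exact (mem_sdiff.1 (mem_inter.1 hx2).2).2 hx
        have e4 := card_sdiff_add_card_inter K.1 (T ∪ T')
        rw [e3, card_union_of_disjoint hd, hT, cB, K.2] at e4
        omega
    case bwd =>
      rintro ⟨B, C⟩ hp
      rw [mem_product, mem_powersetCard, mem_powersetCard] at hp
      obtain ⟨⟨hB, hBc⟩, hC, hCc⟩ := hp
      rw [mem_filter]
      refine ⟨mem_univ _, ?_, ?_⟩
      · exact subset_union_left.trans subset_union_left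
      · have e5 : (T ∪ B ∪ C) ∩ T' = (T ∩ T') ∪ B := by
          ext x
          simp only [mem_inter, mem_union]
          constructor
          · rintro ⟨(h1 | h1) | h1, h2⟩
            · exact Or.inl ⟨h1, h2⟩
            · exact Or.inr h1
            · exact absurd (mem_union.2 (Or.inr h2)) (mem_compl.1 (hC h1))
          · rintro (⟨h1, h2⟩ | h1)
            · exact ⟨Or.inl (Or.inl h1), h2⟩
            · exact ⟨Or.inl (Or.inr h1), (mem_sdiff.1 (hB h1)).1⟩
        have hd : Disjoint (T ∩ T') B := by
          rw [Finset.disjoint_left]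
          intro x hx hx2
          exact (mem_sdiff.1 (hB hx2)).2 (mem_inter.1 hx).1
        rw [e5, card_union_of_disjoint hd, ← hi, hBc]
        omega
    case linv =>
      rintro K hK
      rw [mem_filter] at hK
      obtain ⟨-, hTK, -⟩ := hK
      apply Subtype.ext
      ext x
      simp only [mem_union, mem_inter, mem_sdiff, mem_compl]
      constructor
      · rintro ((h1 | ⟨h1, -⟩) | ⟨h1, -⟩)
        · exact hTK h1
        · exact h1
        · exact h1
      · intro hx
        by_cases hxT : x ∈ T
        · exact Or.inl (Or.inl hxT)
        by_cases hxT' : x ∈ T'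
        · exact Or.inl (Or.inr ⟨hx, hxT', hxT⟩)
        · exact Or.inr ⟨hx, fun hh => by rcases hh with h' | h' <;> tauto⟩
    case rinv =>
      rintro ⟨B, C⟩ hp
      rw [mem_product, mem_powersetCard, mem_powersetCard] at hp
      obtain ⟨⟨hB, -⟩, hC, -⟩ := hp
      have hBmem : ∀ x ∈ B, x ∈ T' ∧ x ∉ T := fun x hx => mem_sdiff.1 (hB hx)
      have hCmem : ∀ x ∈ C, x ∉ T ∧ x ∉ T' := fun x hx => by
        have := mem_compl.1 (hC hx)
        constructor <;> intro h' <;> exact this (mem_union.2 (by tauto))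
      have eB : (T ∪ B ∪ C) ∩ (T' \ T) = B := by
        ext x
        simp only [mem_inter, mem_union, mem_sdiff]
        constructor
        · rintro ⟨(h1 | h1) | h1, h2, h3⟩
          · exact absurd h1 h3
          · exact h1
          · exact absurd h2 (hCmem x h1).2
        · intro hx
          exact ⟨Or.inl (Or.inr hx), (hBmem x hx).1, (hBmem x hx).2⟩
      have eC : (T ∪ B ∪ C) \ (T ∪ T') = C := by
        ext x
        simp only [mem_sdiff, mem_union]
        constructor
        · rintro ⟨(h1 | h1) | h1, h2⟩
          · exact absurd (Or.inl h1) h2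
          · exact absurd (Or.inr (hBmem x h1).1) h2
          · exact h1
        · intro hx
          refine ⟨Or.inr hx, ?_⟩
          rintro (h' | h')
          · exact (hCmem x hx).1 h'
          · exact (hCmem x hx).2 h'
      simp only [eB, eC]
  · rw [gottA, if_neg hij]
    rw [Finset.card_eq_zero, filter_eq_empty_iff]
    rintro K - ⟨hTK, hcard⟩
    apply hij
    constructor
    · have hss : T ∩ T' ⊆ K.1 ∩ T' := fun x hx => by
        rcases mem_inter.1 hx with ⟨hx1, hx2⟩
        exact mem_inter.2 ⟨hTK hx1, hx2⟩
      have := card_le_card hss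
      omega
    · have hsub : K.1 ∩ T' ⊆ (T ∩ T') ∪ (K.1 \ T) := by
        intro x hx
        simp only [mem_inter, mem_union, mem_sdiff] at *
        tauto
      have h3 : (K.1 \ T).card = k - t := by rw [card_sdiff_of_subset hTK, K.2, hT]
      have h4 := card_le_card hsub
      have h5 := card_union_le (T ∩ T') (K.1 \ T)
      omega

lemma gottA_pos {n t k i : ℕ} (htk : t ≤ k) (h : t + k ≤ n) (hit : i ≤ t) :
    0 < gottA n t k i i := by
  rw [gottA, if_pos ⟨le_refl i, Nat.le_add_left i _⟩]
  have h1 : t - i = t - i := rfl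
  have h2 : i - i = 0 := by omega
  have h3 : k - t + i - i = k - t := by omega
  rw [h2, h3, Nat.choose_zero_right, one_mul]
  exact Nat.choose_pos (by omega)

def gottC (n t k : ℕ) (i : ℕ) : ℚ :=
  if h : i < t then
    -(∑ j ∈ (Finset.Ioc i t).attach, (gottA n t k i j.1 : ℚ) * gottC n t k j.1)
      / (gottA n t k i i : ℚ)
  else if i = t then 1 / (gottA n t k t t : ℚ) else 0
termination_by t - i
decreasing_by
  · have hj := j.2
    rw [Finset.mem_Ioc] at hj
    omega

lemma gottC_sum {n t k : ℕ} (htk : t ≤ k) (h : t + k ≤ n) {i : ℕ} (hit : i ≤ t) :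
    ∑ j ∈ Finset.range (t+1), (gottA n t k i j : ℚ) * gottC n t k j
      = if i = t then 1 else 0 := by
  have hpos : (0:ℚ) < (gottA n t k i i : ℚ) := by exact_mod_cast gottA_pos htk h hit
  have hsum : ∑ j ∈ Finset.range (t+1), (gottA n t k i j : ℚ) * gottC n t k j
      = ∑ j ∈ Finset.Icc i t, (gottA n t k i j : ℚ) * gottC n t k j := by
    refine (Finset.sum_subset ?_ ?_).symm
    · intro j hj
      rw [Finset.mem_Icc] at hj
      rw [Finset.mem_range]
      omega
    · intro j hj hj2
      rw [Finset.mem_range] at hj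
      rw [Finset.mem_Icc] at hj2
      have : ¬ (i ≤ j ∧ j ≤ k - t + i) := by
        intro hc
        exact hj2 ⟨hc.1, by omega⟩
      rw [gottA, if_neg this]
      simp
  rw [hsum, Finset.Icc_eq_cons_Ioc hit, Finset.sum_cons]
  have hattach : ∑ j ∈ Finset.Ioc i t, (gottA n t k i j : ℚ) * gottC n t k j
      = ∑ j ∈ (Finset.Ioc i t).attach, (gottA n t k i j.1 : ℚ) * gottC n t k j.1 :=
    (Finset.sum_attach _ _).symm
  by_cases hlt : i < t
  · rw [if_neg (by omega)]
    rw [gottC, dif_pos hlt]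
    rw [hattach]
    field_simp
    ring
  · have hieq : i = t := by omega
    subst hieq
    rw [if_pos rfl]
    rw [gottC, dif_neg hlt, if_pos rfl]
    rw [Finset.Ioc_self, Finset.sum_empty, add_zero]
    field_simp

lemma gott_inner {n t k : ℕ} (htk : t ≤ k) (h : t + k ≤ n)
    (T T₀ : {s : Finset (Fin n) // s.card = t}) :
    ∑ K : {s : Finset (Fin n) // s.card = k},
        gottC n t k (K.1 ∩ T₀.1).card * (if T.1 ⊆ K.1 then (1:ℚ) else 0)
      = if T = T₀ then 1 else 0 := by
  have hmaps : ∀ K : {s : Finset (Fin n) // s.card = k}, K ∈ Finset.univ →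
      (K.1 ∩ T₀.1).card ∈ Finset.range (t+1) := by
    intro K _
    rw [Finset.mem_range]
    have := card_le_card (inter_subset_right (s₁ := K.1) (s₂ := T₀.1))
    rw [T₀.2] at this
    omega
  rw [← Finset.sum_fiberwise_of_maps_to hmaps]
  have hstep : ∀ j ∈ Finset.range (t+1),
      (∑ K ∈ Finset.univ.filter (fun K : {s : Finset (Fin n) // s.card = k} =>
          (K.1 ∩ T₀.1).card = j),
        gottC n t k (K.1 ∩ T₀.1).card * (if T.1 ⊆ K.1 then (1:ℚ) else 0))
      = (gottA n t k (T.1 ∩ T₀.1).card j : ℚ) * gottC n t k j := by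
    intro j _
    have e1 : ∀ K ∈ Finset.univ.filter (fun K : {s : Finset (Fin n) // s.card = k} =>
        (K.1 ∩ T₀.1).card = j),
        gottC n t k (K.1 ∩ T₀.1).card * (if T.1 ⊆ K.1 then (1:ℚ) else 0)
          = gottC n t k j * (if T.1 ⊆ K.1 then (1:ℚ) else 0) := by
      intro K hK
      rw [(Finset.mem_filter.1 hK).2]
    rw [Finset.sum_congr rfl e1, ← Finset.mul_sum, Finset.sum_boole, Finset.filter_filter]
    have e2 : Finset.filter (fun K : {s : Finset (Fin n) // s.card = k} =>
          (K.1 ∩ T₀.1).card = j ∧ T.1 ⊆ K.1) Finset.univ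
        = Finset.filter (fun K : {s : Finset (Fin n) // s.card = k} =>
          T.1 ⊆ K.1 ∧ (K.1 ∩ T₀.1).card = j) Finset.univ :=
      Finset.filter_congr (fun K _ => and_comm)
    rw [e2, gott_count htk h T.2 T₀.2 j, mul_comm]
  rw [Finset.sum_congr rfl hstep]
  have hit : (T.1 ∩ T₀.1).card ≤ t := by
    have := card_le_card (inter_subset_left (s₁ := T.1) (s₂ := T₀.1))
    rw [T.2] at this
    exact this
  rw [gottC_sum htk h hit]
  congr 1
  rw [eq_iff_iff]
  constructor
  · intro hc
    have h1 : T.1 ∩ T₀.1 = T.1 := by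
      apply Finset.eq_of_subset_of_card_le inter_subset_left
      rw [T.2, hc]
    have h2 : T.1 ⊆ T₀.1 := by
      rw [← h1]; exact inter_subset_right
    have h3 : T.1 = T₀.1 := Finset.eq_of_subset_of_card_le h2 (by rw [T.2, T₀.2])
    exact Subtype.ext h3
  · intro hc
    subst hc
    rw [Finset.inter_self, T.2]

lemma gott_inj {n t k : ℕ} (htk : t ≤ k) (h : t + k ≤ n)
    (f : {s : Finset (Fin n) // s.card = t} → ℚ)
    (hf : ∀ K : {s : Finset (Fin n) // s.card = k},
      ∑ T : {s : Finset (Fin n) // s.card = t},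
        (if T.1 ⊆ K.1 then (1:ℚ) else 0) * f T = 0) :
    f = 0 := by
  funext T₀
  have key : ∑ K : {s : Finset (Fin n) // s.card = k},
      gottC n t k (K.1 ∩ T₀.1).card *
        (∑ T : {s : Finset (Fin n) // s.card = t},
          (if T.1 ⊆ K.1 then (1:ℚ) else 0) * f T) = 0 := by
    simp only [hf, mul_zero, Finset.sum_const_zero]
  simp only [Finset.mul_sum] at key
  rw [Finset.sum_comm] at key
  have e3 : ∀ T : {s : Finset (Fin n) // s.card = t},
      (∑ K : {s : Finset (Fin n) // s.card = k},
        gottC n t k (K.1 ∩ T₀.1).card * ((if T.1 ⊆ K.1 then (1:ℚ) else 0) * f T))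
      = (if T = T₀ then (1:ℚ) else 0) * f T := by
    intro T
    rw [← gott_inner htk h T T₀, Finset.sum_mul]
    apply Finset.sum_congr rfl
    intro K _
    ring
  rw [Finset.sum_congr rfl (fun T _ => e3 T)] at key
  simp only [ite_mul, one_mul, zero_mul] at key
  rw [Finset.sum_ite_eq' Finset.univ T₀ f] at key
  simpa using key

/-- The inclusion matrix `W_{t,k}` over `ℚ`: rows indexed by `t`-subsets, columns by
`k`-subsets of `{1,…,n}`, with entry `1` iff the row subset is contained in the column subset. -/
def inclMatrixQ (n t k : ℕ) :
    Matrix {s : Finset (Fin n) // s.card = t} {s : Finset (Fin n) // s.card = k} ℚ :=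
  fun T K => if T.1 ⊆ K.1 then 1 else 0

theorem stmt8 (n t k : ℕ) (htk : t ≤ k) (h : t + k ≤ n) :
    (inclMatrixQ n t k).rank = n.choose t := by
  rw [← Matrix.rank_transpose]
  have hinj : Function.Injective (Matrix.mulVecLin (inclMatrixQ n t k)ᵀ) := by
    apply LinearMap.ker_eq_bot.mp
    rw [LinearMap.ker_eq_bot']
    intro f hf0
    apply gott_inj htk h f
    intro K
    have := congrFun hf0 K
    simpa [Matrix.mulVecLin_apply, Matrix.mulVec, Matrix.vecMul, dotProduct,
      Matrix.transpose_apply, inclMatrixQ, mul_comm] using this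
  rw [Matrix.rank, LinearMap.finrank_range_of_inj hinj,
    Module.finrank_fintype_fun_eq_card, Fintype.card_finset_len, Fintype.card_fin]
end

section
/- For $t \leq k \leq n/2$, the inclusion matrix $W_{t,k}$ of $t$-subsets versus $k$-subsets of an $n$-set is integrally equivalent to a diagonal matrix with diagonal entries $\binom{k-j}{t-j}$ occurring with multiplicity $\binom{n}{j} - \binom{n}{j-1}$ for $j = 0, 1, \ldots, t$. -/
/-- Two integer matrices are integrally equivalent if, after identifying the index sets
by bijections (a relabelling, which is a unimodular operation), one is obtained from the
other by multiplying on the left and right by unimodular integer matrices. -/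
def IntEquiv {α β γ δ : Type*} [Fintype α] [Fintype β] [Fintype γ] [Fintype δ]
    [DecidableEq γ] [DecidableEq δ]
    (A : Matrix α β ℤ) (B : Matrix γ δ ℤ) : Prop :=
  ∃ (er : α ≃ γ) (ec : β ≃ δ) (U : Matrix γ γ ℤ) (V : Matrix δ δ ℤ),
    IsUnit U.det ∧ IsUnit V.det ∧ U * (A.submatrix er.symm ec.symm) * V = B

/-- The inclusion matrix `W_{t,k}` over `ℤ`. -/
def inclMatrix (n t k : ℕ) :
    Matrix {s : Finset (Fin n) // s.card = t} {s : Finset (Fin n) // s.card = k} ℤ :=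
  fun T K => if T.1 ⊆ K.1 then 1 else 0

/-- Wilson's diagonal form for `W_{t,k}`: the `i`-th diagonal entry is `C(k-j, t-j)` where
`j` is minimal with `i < C(n,j)`; thus the entry `C(k-j, t-j)` occurs with multiplicity
`C(n,j) - C(n,j-1)` for `j = 0, 1, …, t`, in increasing order of `j`. -/
noncomputable def wilsonDiag (n t k : ℕ) : Matrix (Fin (n.choose t)) (Fin (n.choose k)) ℤ :=
  fun a b =>
    if (a : ℕ) = (b : ℕ) then
      (((k - sInf {j : ℕ | (a : ℕ) < n.choose j}).choose
        (t - sInf {j : ℕ | (a : ℕ) < n.choose j}) : ℕ) : ℤ)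
    else 0

/-!
Call `B ⊆ {0, …, n-1}` a ballot set if every initial segment `{0, …, b-1}` contains at most
`b / 2` elements of `B`. For `2m ≤ n + 1` the inclusion matrix `X_m` of ballot sets of size
`≤ m` against `m`-sets is square and unimodular. Splitting both families according to whether
they contain `n - 1` makes `X_m` block upper triangular, with diagonal blocks the matrices `X_m`
and `X_{m-1}` for `n - 1` (Pascal's rule). In the one remaining case `n = 2m + 1`, passing to
complements turns `X_{m+1}` into the disjointness matrix, which is `X_m` multiplied by the
involution `(-1)^|S| [S ⊆ B]` (Möbius inversion on the lower set of ballot sets).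

Since exactly `C(k - |B|, t - |B|)` of the `t`-sets lie between `B` and a `k`-set `K ⊇ B`,
`X_t W_{t,k} = D X_k`, where `D` sends each ballot set `B` of size `≤ t` to itself with weight
`C(k - |B|, t - |B|)`. Listing ballot sets by size puts those of size `j` in the positions
`C(n, j-1), …, C(n, j) - 1`.
-/

open Finset Matrix

namespace Matrix

variable {R : Type*} [CommRing R] {ι κ ι' κ' : Type*}

def IsUnimodular [Fintype ι] [DecidableEq ι] (A : Matrix ι κ R) : Prop :=
  ∃ e : ι ≃ κ, IsUnit (A.submatrix id e).det

namespace IsUnimodular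

variable [Fintype ι] [DecidableEq ι]

lemma card_eq [Fintype κ] {A : Matrix ι κ R} (hA : A.IsUnimodular) :
    Fintype.card ι = Fintype.card κ :=
  let ⟨e, _⟩ := hA; Fintype.card_congr e

lemma submatrix [Fintype ι'] [DecidableEq ι'] {A : Matrix ι κ R} (hA : A.IsUnimodular)
    (e₁ : ι' ≃ ι) (e₂ : κ' ≃ κ) : (A.submatrix e₁ e₂).IsUnimodular := by
  obtain ⟨e, he⟩ := hA
  refine ⟨e₁.trans (e.trans e₂.symm), ?_⟩
  have : (A.submatrix e₁ e₂).submatrix id (e₁.trans (e.trans e₂.symm)) =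
      (A.submatrix id e).submatrix e₁ e₁ := by
    ext; simp
  rwa [this, det_submatrix_equiv_self]

lemma fromBlocks_zero₂₁ [Fintype ι'] [DecidableEq ι'] {A : Matrix ι κ R} {D : Matrix ι' κ' R}
    (hA : A.IsUnimodular) (hD : D.IsUnimodular) (B : Matrix ι κ' R) :
    (fromBlocks A B 0 D).IsUnimodular := by
  obtain ⟨e, he⟩ := hA
  obtain ⟨f, hf⟩ := hD
  refine ⟨e.sumCongr f, ?_⟩
  have : (fromBlocks A B 0 D).submatrix id (e.sumCongr f) =
      fromBlocks (A.submatrix id e) (B.submatrix id f) 0 (D.submatrix id f) := by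
    ext (i | i) (j | j) <;> simp
  rw [this, det_fromBlocks_zero₂₁]
  exact he.mul hf

lemma mul_left {G : Matrix ι ι R} (hG : IsUnit G.det) {A : Matrix ι κ R}
    (hA : A.IsUnimodular) : (G * A).IsUnimodular := by
  obtain ⟨e, he⟩ := hA
  refine ⟨e, ?_⟩
  rw [← submatrix_mul_equiv G A id (Equiv.refl ι) e]
  simpa using hG.mul he

end IsUnimodular

end Matrix

lemma IntEquiv.submatrix {α β γ δ α' β' γ' δ' : Type*} [Fintype α] [Fintype β] [Fintype γ]
    [Fintype δ] [DecidableEq γ] [DecidableEq δ] [Fintype α'] [Fintype β'] [Fintype γ']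
    [Fintype δ'] [DecidableEq γ'] [DecidableEq δ'] {A : Matrix α β ℤ} {B : Matrix γ δ ℤ}
    (h : IntEquiv A B) (e₁ : α' ≃ α) (e₂ : β' ≃ β) (f₁ : γ' ≃ γ) (f₂ : δ' ≃ δ) :
    IntEquiv (A.submatrix e₁ e₂) (B.submatrix f₁ f₂) := by
  obtain ⟨er, ec, U, V, hU, hV, rfl⟩ := h
  refine ⟨e₁.trans (er.trans f₁.symm), e₂.trans (ec.trans f₂.symm), U.submatrix f₁ f₁,
    V.submatrix f₂ f₂, by rwa [det_submatrix_equiv_self], by rwa [det_submatrix_equiv_self], ?_⟩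
  rw [← submatrix_mul_equiv _ _ _ f₂, ← submatrix_mul_equiv _ _ _ f₁]
  congr 2
  ext; simp

lemma intEquiv_of_mul_eq {ρ σ τ κ : Type*} [Fintype ρ] [Fintype σ] [Fintype τ] [Fintype κ]
    [DecidableEq ρ] [DecidableEq σ] {X : Matrix ρ τ ℤ} {W : Matrix τ κ ℤ} {D : Matrix ρ σ ℤ}
    {Y : Matrix σ κ ℤ} (hX : X.IsUnimodular) (hY : Y.IsUnimodular) (h : X * W = D * Y) :
    IntEquiv W D := by
  obtain ⟨e, he⟩ := hX
  obtain ⟨f, hf⟩ := hY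
  refine ⟨e.symm, f.symm, X.submatrix id e, (Y.submatrix id f)⁻¹, he,
    isUnit_nonsing_inv_det_iff.2 hf, ?_⟩
  rw [Equiv.symm_symm, Equiv.symm_symm, submatrix_mul_equiv, h,
    submatrix_mul _ _ _ id _ Function.bijective_id, submatrix_id_id,
    mul_nonsing_inv_cancel_right _ _ hf]

section SetFamily

variable {α : Type*} [DecidableEq α]

def inclusionMatrix (𝒜 ℬ : Finset (Finset α)) : Matrix 𝒜 ℬ ℤ :=
  fun A B => if A.1 ⊆ B.1 then 1 else 0

def disjointnessMatrix (𝒜 ℬ : Finset (Finset α)) : Matrix 𝒜 ℬ ℤ :=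
  fun A B => if Disjoint A.1 B.1 then 1 else 0

def signedSubsetMatrix (𝒜 : Finset (Finset α)) : Matrix 𝒜 𝒜 ℤ :=
  fun A A' => if A'.1 ⊆ A.1 then (-1) ^ #A'.1 else 0

def memberSplitEquiv (𝒜 : Finset (Finset α)) (a : α) :
    𝒜 ≃ ↥(𝒜.nonMemberSubfamily a) ⊕ ↥(𝒜.memberSubfamily a) where
  toFun A := if h : a ∈ A.1 then
      .inr ⟨A.1.erase a,
        mem_memberSubfamily.2 ⟨by rw [insert_erase h]; exact A.2, notMem_erase _ _⟩⟩
    else .inl ⟨A.1, mem_nonMemberSubfamily.2 ⟨A.2, h⟩⟩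
  invFun := Sum.elim (fun A => ⟨A.1, (mem_nonMemberSubfamily.1 A.2).1⟩)
    (fun A => ⟨insert a A.1, (mem_memberSubfamily.1 A.2).1⟩)
  left_inv A := by
    by_cases h : a ∈ A.1 <;> simp [h]
  right_inv := by
    rintro (A | A)
    · simp [(mem_nonMemberSubfamily.1 A.2).2]
    · simp [(mem_memberSubfamily.1 A.2).2]

lemma inclusionMatrix_submatrix_memberSplitEquiv (𝒜 ℬ : Finset (Finset α)) (a : α) :
    (inclusionMatrix 𝒜 ℬ).submatrix (memberSplitEquiv 𝒜 a).symm (memberSplitEquiv ℬ a).symm =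
      fromBlocks (inclusionMatrix (𝒜.nonMemberSubfamily a) (ℬ.nonMemberSubfamily a))
        (inclusionMatrix (𝒜.nonMemberSubfamily a) (ℬ.memberSubfamily a)) 0
        (inclusionMatrix (𝒜.memberSubfamily a) (ℬ.memberSubfamily a)) := by
  ext (A | A) (B | B)
  · rfl
  · simp [memberSplitEquiv, inclusionMatrix,
      subset_insert_iff_of_notMem (mem_nonMemberSubfamily.1 A.2).2]
  · simp [memberSplitEquiv, inclusionMatrix, insert_subset_iff,
      (mem_nonMemberSubfamily.1 B.2).2]
  · simp [memberSplitEquiv, inclusionMatrix, (mem_memberSubfamily.1 A.2).2]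

lemma isUnimodular_inclusionMatrix_of_split {𝒜 ℬ : Finset (Finset α)} (a : α)
    (h₀ : (inclusionMatrix (𝒜.nonMemberSubfamily a) (ℬ.nonMemberSubfamily a)).IsUnimodular)
    (h₁ : (inclusionMatrix (𝒜.memberSubfamily a) (ℬ.memberSubfamily a)).IsUnimodular) :
    (inclusionMatrix 𝒜 ℬ).IsUnimodular := by
  have := (h₀.fromBlocks_zero₂₁ h₁
    (inclusionMatrix (𝒜.nonMemberSubfamily a) (ℬ.memberSubfamily a))).submatrix
      (memberSplitEquiv 𝒜 a) (memberSplitEquiv ℬ a)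
  rwa [← inclusionMatrix_submatrix_memberSplitEquiv, submatrix_submatrix, Equiv.symm_comp_self,
    Equiv.symm_comp_self, submatrix_id_id] at this

lemma sum_ite_subset_eq_sum_powerset {M : Type*} [AddCommMonoid M] {𝒜 : Finset (Finset α)}
    (h𝒜 : IsLowerSet (𝒜 : Set (Finset α))) {A : Finset α} (hA : A ∈ 𝒜) (f : Finset α → M) :
    ∑ A' : 𝒜, (if A'.1 ⊆ A then f A'.1 else 0) = ∑ S ∈ A.powerset, f S := by
  rw [sum_coe_sort 𝒜 (fun A' => if A' ⊆ A then f A' else 0), ← sum_filter]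
  congr 1
  ext S
  simpa using fun hS => h𝒜 hS hA

lemma sum_Icc_neg_one_pow_card_mul (C A : Finset α) :
    ∑ B ∈ Icc C A, (-1 : ℤ) ^ #B * (-1) ^ #C = if A = C then 1 else 0 := by
  by_cases hCA : C ⊆ A
  · have hdisj : ∀ T ∈ (A \ C).powerset, Disjoint C T := fun T hT =>
      disjoint_of_subset_right (mem_powerset.1 hT) disjoint_sdiff
    rw [Icc_eq_image_powerset hCA, sum_image fun T hT T' hT' h => by
        simpa [union_sdiff_cancel_left (hdisj T hT), union_sdiff_cancel_left (hdisj T' hT')]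
          using congrArg (· \ C) h]
    rw [sum_congr rfl fun T hT => by
        rw [card_union_of_disjoint (hdisj T hT), ← pow_add, add_right_comm, pow_add,
          Even.neg_one_pow ⟨_, rfl⟩, one_mul],
      sum_powerset_neg_one_pow_card]
    have hAC : A \ C = ∅ ↔ A = C := by
      rw [sdiff_eq_empty_iff_subset]
      exact ⟨fun h => h.antisymm hCA, fun h => h.le⟩
    exact if_congr hAC rfl rfl
  · rw [Icc_eq_empty hCA, sum_empty, if_neg]
    rintro rfl
    exact hCA le_rfl

lemma signedSubsetMatrix_mul_self {𝒜 : Finset (Finset α)}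
    (h𝒜 : IsLowerSet (𝒜 : Set (Finset α))) :
    signedSubsetMatrix 𝒜 * signedSubsetMatrix 𝒜 = 1 := by
  ext A C
  rw [mul_apply]
  simp only [signedSubsetMatrix, ite_mul, zero_mul]
  rw [sum_ite_subset_eq_sum_powerset h𝒜 A.2
    fun B => (-1) ^ #B * if C.1 ⊆ B then (-1) ^ #C.1 else 0]
  simp only [mul_ite, mul_zero]
  rw [← sum_filter, show {B ∈ A.1.powerset | C.1 ⊆ B} = Icc C.1 A.1 by ext; simp [and_comm],
    sum_Icc_neg_one_pow_card_mul, one_apply]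
  exact if_congr Subtype.ext_iff.symm rfl rfl

lemma signedSubsetMatrix_mul_inclusionMatrix {𝒜 : Finset (Finset α)}
    (h𝒜 : IsLowerSet (𝒜 : Set (Finset α))) (ℬ : Finset (Finset α)) :
    signedSubsetMatrix 𝒜 * inclusionMatrix 𝒜 ℬ = disjointnessMatrix 𝒜 ℬ := by
  ext A B
  rw [mul_apply]
  simp only [signedSubsetMatrix, inclusionMatrix, ite_mul, zero_mul]
  rw [sum_ite_subset_eq_sum_powerset h𝒜 A.2 fun S => (-1) ^ #S * if S ⊆ B.1 then 1 else 0]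
  simp only [mul_ite, mul_one, mul_zero]
  rw [← sum_filter, show {S ∈ A.1.powerset | S ⊆ B.1} = (A.1 ∩ B.1).powerset by
      ext; simp only [mem_filter, mem_powerset, subset_inter_iff],
    sum_powerset_neg_one_pow_card]
  exact if_congr disjoint_iff_inter_eq_empty.symm rfl rfl

def powersetCardComplEquiv (u : Finset α) {j k : ℕ} (h : j + k = #u) :
    u.powersetCard j ≃ u.powersetCard k where
  toFun A := ⟨u \ A.1, mem_powersetCard.2 ⟨sdiff_subset, by
    rw [card_sdiff_of_subset (mem_powersetCard.1 A.2).1, (mem_powersetCard.1 A.2).2]; omega⟩⟩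
  invFun B := ⟨u \ B.1, mem_powersetCard.2 ⟨sdiff_subset, by
    rw [card_sdiff_of_subset (mem_powersetCard.1 B.2).1, (mem_powersetCard.1 B.2).2]; omega⟩⟩
  left_inv A := Subtype.ext (Finset.sdiff_sdiff_eq_self (mem_powersetCard.1 A.2).1)
  right_inv B := Subtype.ext (Finset.sdiff_sdiff_eq_self (mem_powersetCard.1 B.2).1)

lemma inclusionMatrix_submatrix_powersetCardComplEquiv {𝒜 : Finset (Finset α)} {u : Finset α}
    (hu : ∀ A ∈ 𝒜, A ⊆ u) {j k : ℕ} (h : j + k = #u) :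
    (inclusionMatrix 𝒜 (u.powersetCard j)).submatrix id (powersetCardComplEquiv u h).symm =
      disjointnessMatrix 𝒜 (u.powersetCard k) := by
  ext A B
  simp [inclusionMatrix, disjointnessMatrix, powersetCardComplEquiv, subset_sdiff, hu A A.2]

lemma isUnimodular_inclusionMatrix_powersetCard_of_compl {𝒜 : Finset (Finset α)}
    (h𝒜 : IsLowerSet (𝒜 : Set (Finset α))) {u : Finset α} (hu : ∀ A ∈ 𝒜, A ⊆ u) {j k : ℕ}
    (h : j + k = #u) (hk : (inclusionMatrix 𝒜 (u.powersetCard k)).IsUnimodular) :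
    (inclusionMatrix 𝒜 (u.powersetCard j)).IsUnimodular := by
  have := (hk.mul_left (isUnit_det_of_left_inverse (signedSubsetMatrix_mul_self h𝒜))).submatrix
    (Equiv.refl _) (powersetCardComplEquiv u h)
  rwa [signedSubsetMatrix_mul_inclusionMatrix h𝒜,
    ← inclusionMatrix_submatrix_powersetCardComplEquiv hu h, submatrix_submatrix,
    Equiv.symm_comp_self, Equiv.coe_refl, Function.comp_id, submatrix_id_id] at this

lemma inclusionMatrix_mul_inclusionMatrix_powersetCard {𝒜 : Finset (Finset α)} {t : ℕ}
    (h𝒜 : ∀ A ∈ 𝒜, #A ≤ t) (u : Finset α) (k : ℕ) :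
    inclusionMatrix 𝒜 (u.powersetCard t) *
        inclusionMatrix (u.powersetCard t) (u.powersetCard k) =
      of fun A K => if A.1 ⊆ K.1 then ((k - #A.1).choose (t - #A.1) : ℤ) else 0 := by
  ext A K
  obtain ⟨hKu, hK⟩ := mem_powersetCard.1 K.2
  simp only [mul_apply, of_apply, inclusionMatrix, boole_mul, ← ite_and]
  rw [sum_coe_sort (u.powersetCard t) fun T => if A.1 ⊆ T ∧ T ⊆ K.1 then (1 : ℤ) else 0,
    sum_boole]
  have : {T ∈ u.powersetCard t | A.1 ⊆ T ∧ T ⊆ K.1} = {T ∈ K.1.powersetCard t | A.1 ⊆ T} := by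
    ext T
    simp only [mem_filter, mem_powersetCard]
    exact ⟨fun h => ⟨⟨h.2.2, h.1.2⟩, h.2.1⟩, fun h => ⟨⟨h.1.1.trans hKu, h.1.2⟩, h.2, h.1.1⟩⟩
  split_ifs with hAK
  · rw [this, card_filter_powersetCard_subset _ _ _ hAK (h𝒜 _ A.2), hK]
  · rw [this, filter_false_of_mem fun T hT hAT => hAK (hAT.trans (mem_powersetCard.1 hT).1)]
    rfl

def subfamilyDiagonal (𝒜 𝒜' : Finset (Finset α)) (c : Finset α → ℤ) : Matrix 𝒜 𝒜' ℤ :=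
  fun A A' => if A.1 = A'.1 then c A.1 else 0

lemma subfamilyDiagonal_mul_inclusionMatrix {𝒜 𝒜' : Finset (Finset α)} (h : 𝒜 ⊆ 𝒜')
    (c : Finset α → ℤ) (ℬ : Finset (Finset α)) :
    subfamilyDiagonal 𝒜 𝒜' c * inclusionMatrix 𝒜' ℬ =
      of fun A B => if A.1 ⊆ B.1 then c A.1 else 0 := by
  ext A B
  rw [mul_apply, Fintype.sum_eq_single ⟨A.1, h A.2⟩]
  · simp [subfamilyDiagonal, inclusionMatrix]
  · intro A' hA'
    rw [subfamilyDiagonal, if_neg fun h => hA' (Subtype.ext h.symm), zero_mul]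

end SetFamily

def IsBallot (B : Finset ℕ) : Prop := ∀ b, 2 * #{x ∈ B | x < b} ≤ b

lemma isBallot_empty : IsBallot ∅ := by
  simp [IsBallot]

lemma IsBallot.mono {B B' : Finset ℕ} (hB : IsBallot B) (h : B' ⊆ B) : IsBallot B' := fun b =>
  (Nat.mul_le_mul_left 2 (card_le_card (filter_subset_filter _ h))).trans (hB b)

lemma IsBallot.two_mul_card_le {B : Finset ℕ} {n : ℕ} (hB : IsBallot B) (hBn : B ⊆ range n) :
    2 * #B ≤ n := by
  simpa [filter_true_of_mem fun x hx => mem_range.1 (hBn hx)] using hB n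

lemma IsBallot.insert {B : Finset ℕ} {n : ℕ} (hB : IsBallot B)
    (h : 2 * (#B + 1) ≤ n + 1) : IsBallot (insert n B) := by
  intro b
  rw [filter_insert]
  split_ifs with hnb
  · have := card_insert_le n {x ∈ B | x < b}
    have := card_filter_le B (· < b)
    omega
  · exact hB b

open Classical in
noncomputable def ballots (n m : ℕ) : Finset (Finset ℕ) :=
  {B ∈ (range n).powerset | IsBallot B ∧ #B ≤ m}

lemma mem_ballots {n m : ℕ} {B : Finset ℕ} :
    B ∈ ballots n m ↔ B ⊆ range n ∧ IsBallot B ∧ #B ≤ m := by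
  simp [ballots]

lemma ballots_mono {n m m' : ℕ} (h : m ≤ m') : ballots n m ⊆ ballots n m' := fun B hB => by
  rw [mem_ballots] at hB ⊢
  exact ⟨hB.1, hB.2.1, hB.2.2.trans h⟩

lemma isLowerSet_ballots (n m : ℕ) : IsLowerSet (ballots n m : Set (Finset ℕ)) :=
  fun B B' h hB => by
  rw [mem_coe, mem_ballots] at hB ⊢
  exact ⟨h.trans hB.1, hB.2.1.mono h, (card_le_card h).trans hB.2.2⟩

lemma ballots_zero (n : ℕ) : ballots n 0 = {∅} := by
  ext B
  simp only [mem_ballots, Nat.le_zero, card_eq_zero, mem_singleton]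
  exact ⟨fun h => h.2.2, by rintro rfl; exact ⟨empty_subset _, isBallot_empty, rfl⟩⟩

lemma ballots_succ_eq {n m : ℕ} (h : n ≤ 2 * m + 1) : ballots n (m + 1) = ballots n m := by
  ext B
  simp only [mem_ballots]
  refine ⟨fun hB => ⟨hB.1, hB.2.1, ?_⟩, fun hB => ⟨hB.1, hB.2.1, hB.2.2.trans m.le_succ⟩⟩
  have := hB.2.1.two_mul_card_le hB.1
  omega

lemma subset_range_iff_subset_range_add_one_and_notMem {B : Finset ℕ} {n : ℕ} :
    B ⊆ range n ↔ B ⊆ range (n + 1) ∧ n ∉ B := by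
  simp only [subset_iff, mem_range]
  exact ⟨fun h => ⟨fun x hx => (h hx).trans n.lt_succ_self, fun hn => (h hn).false⟩,
    fun h x hx => lt_of_le_of_ne (Nat.lt_succ_iff.1 (h.1 hx)) fun hxn => h.2 (hxn ▸ hx)⟩

lemma nonMemberSubfamily_ballots (n m : ℕ) :
    (ballots (n + 1) m).nonMemberSubfamily n = ballots n m := by
  ext B
  rw [mem_nonMemberSubfamily, mem_ballots, mem_ballots,
    subset_range_iff_subset_range_add_one_and_notMem (n := n)]
  tauto

lemma memberSubfamily_ballots {n m : ℕ} (h : 2 * (m + 1) ≤ n + 1) :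
    (ballots (n + 1) (m + 1)).memberSubfamily n = ballots n m := by
  ext B
  rw [mem_memberSubfamily, mem_ballots, mem_ballots,
    subset_range_iff_subset_range_add_one_and_notMem (n := n)]
  constructor
  · rintro ⟨⟨hBn, hB, hcard⟩, hn⟩
    rw [card_insert_of_notMem hn] at hcard
    exact ⟨⟨(insert_subset_iff.1 hBn).2, hn⟩, hB.mono (subset_insert _ _), by omega⟩
  · rintro ⟨⟨hBn, hn⟩, hB, hcard⟩
    refine ⟨⟨insert_subset (self_mem_range_succ n) hBn, hB.insert (by omega), ?_⟩, hn⟩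
    rw [card_insert_of_notMem hn]
    omega

lemma nonMemberSubfamily_powersetCard_range (n j : ℕ) :
    ((range (n + 1)).powersetCard j).nonMemberSubfamily n = (range n).powersetCard j := by
  ext B
  rw [mem_nonMemberSubfamily, mem_powersetCard, mem_powersetCard,
    subset_range_iff_subset_range_add_one_and_notMem (n := n)]
  tauto

lemma memberSubfamily_powersetCard_range (n j : ℕ) :
    ((range (n + 1)).powersetCard (j + 1)).memberSubfamily n = (range n).powersetCard j := by
  ext B
  rw [mem_memberSubfamily, mem_powersetCard, mem_powersetCard,
    subset_range_iff_subset_range_add_one_and_notMem (n := n)]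
  simp only [insert_subset_iff, self_mem_range_succ, true_and]
  constructor
  · rintro ⟨⟨hBn, hcard⟩, hn⟩
    rw [card_insert_of_notMem hn] at hcard
    exact ⟨⟨hBn, hn⟩, by omega⟩
  · rintro ⟨⟨hBn, hn⟩, hcard⟩
    rw [card_insert_of_notMem hn, hcard]
    exact ⟨⟨hBn, rfl⟩, hn⟩

lemma isUnimodular_inclusionMatrix_ballots_zero (n : ℕ) :
    (inclusionMatrix (ballots n 0) ((range n).powersetCard 0)).IsUnimodular := by
  rw [ballots_zero, powersetCard_zero]
  exact ⟨Equiv.refl _, by simp [det_unique, inclusionMatrix]⟩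

theorem isUnimodular_inclusionMatrix_ballots {n m : ℕ} (h : 2 * m ≤ n + 1) :
    (inclusionMatrix (ballots n m) ((range n).powersetCard m)).IsUnimodular := by
  induction n generalizing m with
  | zero =>
    obtain rfl : m = 0 := by omega
    exact isUnimodular_inclusionMatrix_ballots_zero 0
  | succ n ih =>
    have interior : ∀ m, 2 * m ≤ n + 1 →
        (inclusionMatrix (ballots (n + 1) m) ((range (n + 1)).powersetCard m)).IsUnimodular := by
      rintro (_ | m) hm
      · exact isUnimodular_inclusionMatrix_ballots_zero _
      · apply isUnimodular_inclusionMatrix_of_split n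
        · rw [nonMemberSubfamily_ballots, nonMemberSubfamily_powersetCard_range]
          exact ih (by omega)
        · rw [memberSubfamily_ballots hm, memberSubfamily_powersetCard_range]
          exact ih (by omega)
    by_cases hm : 2 * m ≤ n + 1
    · exact interior m hm
    · obtain ⟨m, rfl⟩ : ∃ m', m = m' + 1 := ⟨m - 1, by omega⟩
      -- `n + 1 = 2m + 1`: no ballot set has size `m + 1`, so compare with complements
      rw [ballots_succ_eq (by omega)]
      exact isUnimodular_inclusionMatrix_powersetCard_of_compl (isLowerSet_ballots _ _)
        (fun B hB => (mem_ballots.1 hB).1) (by rw [card_range]; omega) (interior m (by omega))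

lemma card_ballots {n m : ℕ} (h : 2 * m ≤ n + 1) : #(ballots n m) = n.choose m := by
  simpa using (isUnimodular_inclusionMatrix_ballots h).card_eq

def ballotKey (B : Finset ℕ) : ℕ ×ₗ ℕ := toLex (#B, Encodable.encode B)

lemma ballotKey_injective : Function.Injective ballotKey := fun _ _ h =>
  Encodable.encode_injective (congrArg (fun x => (ofLex x).2) h)

lemma card_le_of_ballotKey_lt {B B' : Finset ℕ} (h : ballotKey B < ballotKey B') : #B ≤ #B' := by
  rcases Prod.Lex.lt_iff.1 h with h | ⟨h, -⟩
  exacts [h.le, h.le]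

lemma ballotKey_lt_of_card_lt {B B' : Finset ℕ} (h : #B < #B') : ballotKey B < ballotKey B' :=
  Prod.Lex.lt_iff.2 (Or.inl h)

-- Ranked within `ballots n #B`, so that the rank does not depend on the size bound of the family.
noncomputable def ballotRank (n : ℕ) (B : Finset ℕ) : ℕ :=
  #{B' ∈ ballots n #B | ballotKey B' < ballotKey B}

lemma mem_ballots_card {n m : ℕ} {B : Finset ℕ} (hB : B ∈ ballots n m) : B ∈ ballots n #B :=
  mem_ballots.2 ⟨(mem_ballots.1 hB).1, (mem_ballots.1 hB).2.1, le_rfl⟩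

lemma ballotRank_lt_card {n m : ℕ} {B : Finset ℕ} (hB : B ∈ ballots n m) :
    ballotRank n B < #(ballots n m) := by
  refine card_lt_card ((ssubset_iff_of_subset fun B' hB' => ?_).2 ⟨B, hB, by simp⟩)
  exact ballots_mono (mem_ballots.1 hB).2.2 (mem_filter.1 hB').1

lemma card_ballots_le_ballotRank {n j : ℕ} {B : Finset ℕ} (hj : j < #B) :
    #(ballots n j) ≤ ballotRank n B :=
  card_le_card fun _ hB' => mem_filter.2 ⟨ballots_mono hj.le hB',
    ballotKey_lt_of_card_lt ((mem_ballots.1 hB').2.2.trans_lt hj)⟩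

lemma ballotRank_lt_ballotRank {n : ℕ} {B B' : Finset ℕ} (hB : B ∈ ballots n #B)
    (h : ballotKey B < ballotKey B') : ballotRank n B < ballotRank n B' := by
  have hc := card_le_of_ballotKey_lt h
  refine card_lt_card ((ssubset_iff_of_subset fun C hC => ?_).2
    ⟨B, mem_filter.2 ⟨ballots_mono hc hB, h⟩, by simp⟩)
  rw [mem_filter] at hC ⊢
  exact ⟨ballots_mono hc hC.1, hC.2.trans h⟩

lemma ballotRank_injOn (n m : ℕ) : Set.InjOn (ballotRank n) (ballots n m) := by
  intro B hB B' hB' h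
  by_contra hne
  rcases lt_or_gt_of_ne (ballotKey_injective.ne hne) with hlt | hlt
  · exact (ballotRank_lt_ballotRank (mem_ballots_card hB) hlt).ne h
  · exact (ballotRank_lt_ballotRank (mem_ballots_card hB') hlt).ne' h

lemma sInf_setOf_ballotRank_lt_choose {n m : ℕ} (h : 2 * m ≤ n + 1) {B : Finset ℕ}
    (hB : B ∈ ballots n m) : sInf {j | ballotRank n B < n.choose j} = #B := by
  have hBm := (mem_ballots.1 hB).2.2
  have hlt : ballotRank n B < n.choose #B :=
    card_ballots (n := n) (m := #B) (by omega) ▸ ballotRank_lt_card (mem_ballots_card hB)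
  refine le_antisymm (Nat.sInf_le hlt) (le_csInf ⟨_, hlt⟩ fun j hj => not_lt.1 fun hjB => ?_)
  exact (card_ballots (n := n) (m := j) (by omega) ▸ card_ballots_le_ballotRank hjB).not_gt hj

noncomputable def ballotEquivFin {n m : ℕ} (h : 2 * m ≤ n + 1) : ballots n m ≃ Fin (n.choose m) :=
  Equiv.ofBijective (fun B => ⟨ballotRank n B, card_ballots h ▸ ballotRank_lt_card B.2⟩)
    ((Fintype.bijective_iff_injective_and_card _).2
      ⟨fun B B' hBB' => Subtype.ext (ballotRank_injOn n m B.2 B'.2 (Fin.val_eq_of_eq hBB')),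
        by simp [card_ballots h]⟩)

lemma val_eq_ballotRank_ballotEquivFin_symm {n m : ℕ} (h : 2 * m ≤ n + 1) (a : Fin (n.choose m)) :
    (a : ℕ) = ballotRank n ((ballotEquivFin h).symm a) := by
  conv_lhs => rw [← (ballotEquivFin h).apply_symm_apply a]
  rfl

noncomputable def ballotDiagonal (n t k : ℕ) : Matrix (ballots n t) (ballots n k) ℤ :=
  subfamilyDiagonal (ballots n t) (ballots n k) fun B => ((k - #B).choose (t - #B) : ℤ)

lemma inclusionMatrix_ballots_mul_inclusionMatrix {n t k : ℕ} (htk : t ≤ k) :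
    inclusionMatrix (ballots n t) ((range n).powersetCard t) *
        inclusionMatrix ((range n).powersetCard t) ((range n).powersetCard k) =
      ballotDiagonal n t k * inclusionMatrix (ballots n k) ((range n).powersetCard k) := by
  rw [ballotDiagonal,
    inclusionMatrix_mul_inclusionMatrix_powersetCard fun B hB => (mem_ballots.1 hB).2.2,
    subfamilyDiagonal_mul_inclusionMatrix (ballots_mono htk)]

lemma wilsonDiag_eq_submatrix {n t k : ℕ} (htk : t ≤ k) (hk : 2 * k ≤ n + 1) :
    wilsonDiag n t k =
      (ballotDiagonal n t k).submatrix (ballotEquivFin (n := n) (m := t) (by omega)).symm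
        (ballotEquivFin hk).symm := by
  ext a b
  have ht : 2 * t ≤ n + 1 := by omega
  simp only [wilsonDiag, submatrix_apply, ballotDiagonal, subfamilyDiagonal,
    val_eq_ballotRank_ballotEquivFin_symm ht, val_eq_ballotRank_ballotEquivFin_symm hk,
    sInf_setOf_ballotRank_lt_choose ht (Subtype.prop _)]
  exact if_congr
    ((ballotRank_injOn n k).eq_iff (ballots_mono htk (Subtype.prop _)) (Subtype.prop _)) rfl rfl

def finsetFinEquiv (n m : ℕ) : {s : Finset (Fin n) // #s = m} ≃ (range n).powersetCard m where
  toFun s := ⟨s.1.map Fin.valEmbedding, by simp [mem_powersetCard, subset_iff, s.2]⟩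
  invFun A := ⟨A.1.attachFin fun _ hx => mem_range.1 ((mem_powersetCard.1 A.2).1 hx), by
    rw [card_attachFin, (mem_powersetCard.1 A.2).2]⟩
  left_inv s := by ext; simp [Fin.val_inj]
  right_inv A := Subtype.ext (map_valEmbedding_attachFin _)

lemma inclMatrix_eq_submatrix (n t k : ℕ) :
    inclMatrix n t k = (inclusionMatrix ((range n).powersetCard t)
      ((range n).powersetCard k)).submatrix (finsetFinEquiv n t) (finsetFinEquiv n k) := by
  ext s s'
  simp [inclMatrix, inclusionMatrix, finsetFinEquiv]

theorem stmt9 (n t k : ℕ) (htk : t ≤ k) (hk : 2 * k ≤ n) :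
    IntEquiv (inclMatrix n t k) (wilsonDiag n t k) := by
  have hk' : 2 * k ≤ n + 1 := by omega
  rw [inclMatrix_eq_submatrix, wilsonDiag_eq_submatrix htk hk']
  exact (intEquiv_of_mul_eq (isUnimodular_inclusionMatrix_ballots (by omega))
    (isUnimodular_inclusionMatrix_ballots hk')
    (inclusionMatrix_ballots_mul_inclusionMatrix htk)).submatrix _ _ _ _
end

section
/- Assume $k \leq n/2$. The square matrix $E_k$ whose rows are the vectors $\eta_{j,k}(J)$ for $0 \leq j \leq k$ and $J$ ranging over $j$-subsets of rank $j$ is unimodular, i.e., has determinant $\pm 1$. -/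
instance {n : ℕ} (s : Finset (Fin n)) : Decidable (IsFullRank s) := by
  unfold IsFullRank; infer_instance

/-- The canonical basis matrix `E_k`: rows indexed by the `j`-subsets `J` of rank `j`
(for all `0 ≤ j ≤ k`), columns indexed by `k`-subsets `K`; the row of `J` is the vector
`η_{j,k}(J)`, i.e. has entry `1` at `K` iff `J ⊆ K`. -/
def bierMatrix (n k : ℕ) :
    Matrix {J : Finset (Fin n) // J.card ≤ k ∧ IsFullRank J}
      {K : Finset (Fin n) // K.card = k} ℤ :=
  fun J K => if J.1 ⊆ K.1 then 1 else 0

/-!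
The rows span `ℤ^{k-subsets}`, and for `2k ≤ n` there are exactly `C(n, k)` of them (splitting
off the largest element, full-rank sets of size `≤ k` obey Pascal's rule); a square integer matrix
whose rows span is unimodular.

Spanning is proved by induction on the ground set `{0, …, m - 1}`. A `(k+1)`-subset of
`{0, …, m}` either avoids `m`, or is `insert m K` for a `k`-subset `K` of `{0, …, m - 1}`, so
`η_{k+1}(J) = η'_{k+1}(J) + lift η'_k(J)` (primes for the smaller ground set), and it suffices
that the lift of every row `η'_k(J)` is again in the span. If `insert m J` still has full rank,
this lift is its row. Otherwise `J` is tight (`m = 2|J|`), and inclusion–exclusion writes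
`± η'_k(J)` as the indicator of the `k`-sets disjoint from `J` minus rows of proper subsets of
`J`; the latter are insertable, and the former, because `|J| + k ≥ m`, lifts to the indicator of
the `(k+1)`-sets disjoint from `J`, again a combination of rows.
-/

open Finset

theorem Matrix.isUnit_det_submatrix_of_span_row_eq_top {m n R : Type*} [Fintype m]
    [DecidableEq m] [CommRing R] (A : Matrix m n R) (hA : Submodule.span R (Set.range A.row) = ⊤)
    (e : m ≃ n) : IsUnit (A.submatrix id e).det := by
  rw [← Matrix.isUnit_iff_isUnit_det, ← Matrix.vecMul_surjective_iff_isUnit,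
    ← Matrix.coe_vecMulLinear, ← LinearMap.range_eq_top, range_vecMulLinear]
  have hrows : Set.range (A.submatrix id e).row = LinearMap.funLeft R R e '' Set.range A.row := by
    rw [← Set.range_comp]
    rfl
  rw [hrows, ← Submodule.map_span, hA, Submodule.map_top, LinearMap.range_eq_top]
  exact LinearMap.funLeft_surjective_of_injective _ _ _ e.injective

theorem Finset.card_filter_le_orderEmbOfFin {α : Type*} [LinearOrder α] (s : Finset α)
    (i : Fin #s) : #{y ∈ s | y ≤ s.orderEmbOfFin rfl i} = i + 1 := by
  set f := s.orderEmbOfFin rfl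
  have : {y ∈ s | y ≤ f i} = (Iic i).map f.toEmbedding := by
    ext y
    simp only [mem_filter, mem_map, mem_Iic, RelEmbedding.coe_toEmbedding]
    constructor
    · rintro ⟨hy, hyi⟩
      obtain ⟨j, rfl⟩ : y ∈ Set.range f := by simpa [f] using hy
      exact ⟨j, f.le_iff_le.1 hyi, rfl⟩
    · rintro ⟨j, hj, rfl⟩
      exact ⟨orderEmbOfFin_mem _ _ _, f.le_iff_le.2 hj⟩
  rw [this, card_map, Fin.card_Iic]

namespace Bier

/-- The rank condition on a subset of the ground set `range m`, with the values shifted to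
`0, …, m - 1`: the `ℓ`-th smallest element `x` (counting from `1`) satisfies `2ℓ ≤ x + 1`. -/
def IsBallot (J : Finset ℕ) : Prop := ∀ x ∈ J, 2 * #{y ∈ J | y ≤ x} ≤ x + 1

instance (J : Finset ℕ) : Decidable (IsBallot J) := by unfold IsBallot; infer_instance

lemma notMem_of_subset_range {J : Finset ℕ} {m : ℕ} (hJ : J ⊆ range m) : m ∉ J :=
  fun hm => notMem_range_self (hJ hm)

lemma isBallot_empty : IsBallot ∅ := by simp [IsBallot]

lemma IsBallot.mono {J J' : Finset ℕ} (h : IsBallot J) (hs : J' ⊆ J) : IsBallot J' :=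
  fun x hx => (Nat.mul_le_mul_left 2 (card_le_card (filter_subset_filter _ hs))).trans
    (h x (hs hx))

lemma IsBallot.insert {J : Finset ℕ} {m : ℕ} (h : IsBallot J) (hJ : J ⊆ range m)
    (hc : 2 * (#J + 1) ≤ m + 1) : IsBallot (insert m J) := by
  intro x hx
  rcases mem_insert.1 hx with rfl | hx
  · rw [filter_true_of_mem fun y hy => ?_, card_insert_of_notMem (notMem_of_subset_range hJ)]
    · exact hc
    · rcases mem_insert.1 hy with rfl | hy
      · exact le_rfl
      · exact (mem_range.1 (hJ hy)).le
  · rw [filter_insert, if_neg (not_le.2 (mem_range.1 (hJ hx)))]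
    exact h x hx

lemma IsBallot.two_mul_card_le {J : Finset ℕ} {m : ℕ} (h : IsBallot J) (hJ : J ⊆ range m) :
    2 * #J ≤ m := by
  rcases J.eq_empty_or_nonempty with rfl | hne
  · simp
  · have hmax := h _ (J.max'_mem hne)
    rw [filter_true_of_mem fun y hy => J.le_max' y hy] at hmax
    have := mem_range.1 (hJ (J.max'_mem hne))
    omega

lemma isFullRank_iff_isBallot {n : ℕ} (s : Finset (Fin n)) :
    IsFullRank s ↔ IsBallot (s.map Fin.valEmbedding) := by
  set f := s.orderEmbOfFin rfl
  have hvals (i : Fin #s) : (sortedVals s).getD i 0 = f i + 1 := by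
    simp [sortedVals, orderEmbOfFin_apply, f, ← List.map_eq_flatMap]
  have hcount (x : Fin n) :
      #{y ∈ s.map Fin.valEmbedding | y ≤ (x : ℕ)} = #{y ∈ s | y ≤ x} := by
    rw [filter_map, card_map]
    rfl
  calc IsFullRank s ↔ ∀ i : Fin #s, 2 * #{y ∈ s | y ≤ f i} ≤ f i + 1 := by
        simp only [card_filter_le_orderEmbOfFin, f, ← hvals]
        exact ⟨fun h i => h i i.2, fun h j hj => h ⟨j, hj⟩⟩
    _ ↔ ∀ x ∈ s, 2 * #{y ∈ s | y ≤ x} ≤ x + 1 := by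
        refine ⟨fun h x hx => ?_, fun h i => h _ (orderEmbOfFin_mem _ _ _)⟩
        obtain ⟨i, rfl⟩ : x ∈ Set.range f := by simpa [f] using hx
        exact h i
    _ ↔ IsBallot (s.map Fin.valEmbedding) := by
        simp [IsBallot, hcount]

lemma subset_range_iff_exists_map_valEmbedding {n : ℕ} {J : Finset ℕ} :
    J ⊆ range n ↔ ∃ s : Finset (Fin n), s.map Fin.valEmbedding = J := by
  simp [← Nat.Iio_eq_range, ← Fin.map_valEmbedding_univ, subset_map_iff, eq_comm]

def ballotSets (m k : ℕ) : Finset (Finset ℕ) := {J ∈ (range m).powerset | IsBallot J ∧ #J ≤ k}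

lemma mem_ballotSets {m k : ℕ} {J : Finset ℕ} :
    J ∈ ballotSets m k ↔ J ⊆ range m ∧ IsBallot J ∧ #J ≤ k := by
  rw [ballotSets, mem_filter, mem_powerset]

lemma ballotSets_zero (m : ℕ) : ballotSets m 0 = {∅} := by
  ext J
  simp only [mem_ballotSets, mem_singleton, Nat.le_zero, card_eq_zero]
  exact ⟨fun h => h.2.2, by rintro rfl; exact ⟨empty_subset _, isBallot_empty, rfl⟩⟩

lemma ballotSets_succ_of_le {m k : ℕ} (h : m ≤ 2 * k + 1) :
    ballotSets m (k + 1) = ballotSets m k := by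
  ext J
  simp only [mem_ballotSets]
  constructor
  · rintro ⟨hJ, hb, -⟩
    exact ⟨hJ, hb, by have := hb.two_mul_card_le hJ; omega⟩
  · rintro ⟨hJ, hb, hk⟩
    exact ⟨hJ, hb, by omega⟩

lemma card_ballotSets_succ_succ {m k : ℕ} (h : 2 * (k + 1) ≤ m + 1) :
    #(ballotSets (m + 1) (k + 1)) = #(ballotSets m (k + 1)) + #(ballotSets m k) := by
  have hsplit : ballotSets (m + 1) (k + 1) =
      ballotSets m (k + 1) ∪ (ballotSets m k).image (insert m) := by
    ext J
    simp only [mem_union, mem_image, mem_ballotSets, range_add_one]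
    constructor
    · rintro ⟨hJ, hb, hk⟩
      by_cases hm : m ∈ J
      · refine .inr ⟨J.erase m, ⟨subset_insert_iff.1 hJ, hb.mono (erase_subset _ _), ?_⟩,
          insert_erase hm⟩
        rw [card_erase_of_mem hm]
        omega
      · exact .inl ⟨(subset_insert_iff_of_notMem hm).1 hJ, hb, hk⟩
    · rintro (⟨hJ, hb, hk⟩ | ⟨J, ⟨hJ, hb, hk⟩, rfl⟩)
      · exact ⟨hJ.trans (subset_insert _ _), hb, hk⟩
      · refine ⟨insert_subset_insert _ hJ, hb.insert hJ (by omega), ?_⟩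
        rw [card_insert_of_notMem (notMem_of_subset_range hJ)]
        omega
  have hdisj : Disjoint (ballotSets m (k + 1)) ((ballotSets m k).image (insert m)) := by
    simp only [disjoint_left, mem_image, not_exists, not_and]
    intro J hJ J' _ hJ'
    exact notMem_of_subset_range (mem_ballotSets.1 hJ).1 (hJ' ▸ mem_insert_self m J')
  have hinj : Set.InjOn (insert m) (ballotSets m k : Set (Finset ℕ)) := fun J hJ J' hJ' he => by
    rw [← erase_insert (notMem_of_subset_range (mem_ballotSets.1 hJ).1), he,
      erase_insert (notMem_of_subset_range (mem_ballotSets.1 hJ').1)]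
  rw [hsplit, card_union_of_disjoint hdisj, card_image_of_injOn hinj]

lemma card_ballotSets {m k : ℕ} (h : 2 * k ≤ m) : #(ballotSets m k) = m.choose k := by
  induction m generalizing k with
  | zero =>
    obtain rfl : k = 0 := by omega
    simp [ballotSets_zero]
  | succ m ih =>
    rcases k with _ | k
    · simp [ballotSets_zero]
    rw [card_ballotSets_succ_succ (by omega), ih (k := k) (by omega), Nat.choose_succ_succ',
      add_comm (m.choose k)]
    congr 1
    rcases Nat.lt_or_ge m (2 * (k + 1)) with hm | hm
    · obtain rfl : m = 2 * k + 1 := by omega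
      rw [ballotSets_succ_of_le le_rfl, ih (by omega), Nat.choose_symm_half]
    · exact ih hm

/-- Vectors of `M_k` over the ground set `range m` are functions on all of `Finset ℕ` supported
on the `k`-subsets of `range m`; this is the indicator of those satisfying `P`. -/
noncomputable def sliceIndicator (m k : ℕ) (P : Finset ℕ → Prop) : Finset ℕ → ℤ :=
  {K | K ⊆ range m ∧ #K = k ∧ P K}.indicator 1

noncomputable def eta (m k : ℕ) (J : Finset ℕ) : Finset ℕ → ℤ := sliceIndicator m k (J ⊆ ·)

/-- Transports `M_k` over `range m` to the part of `M_{k+1}` over `range (m + 1)` spanned by the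
sets containing `m`, via `K ↦ insert m K`. -/
def pushInsert (a : ℕ) : (Finset ℕ → ℤ) →ₗ[ℤ] (Finset ℕ → ℤ) where
  toFun f K := if a ∈ K then f (K.erase a) else 0
  map_add' f g := by ext K; by_cases h : a ∈ K <;> simp [h]
  map_smul' c f := by ext K; by_cases h : a ∈ K <;> simp [h]

lemma pushInsert_apply (a : ℕ) (f : Finset ℕ → ℤ) (K : Finset ℕ) :
    pushInsert a f K = if a ∈ K then f (K.erase a) else 0 := rfl

section Slices

variable {m k : ℕ} {P Q : Finset ℕ → Prop}

lemma sliceIndicator_congr (h : ∀ K ⊆ range m, #K = k → (P K ↔ Q K)) :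
    sliceIndicator m k P = sliceIndicator m k Q := by
  unfold sliceIndicator
  congr 1
  exact Set.ext fun K => and_congr_right fun h₁ => and_congr_right fun h₂ => h K h₁ h₂

lemma sliceIndicator_eq_zero (h : ∀ K ⊆ range m, #K = k → ¬ P K) :
    sliceIndicator m k P = 0 := by
  ext K
  exact Set.indicator_of_notMem (fun hK : K ∈ {K | _} => h K hK.1 hK.2.1 hK.2.2) _

lemma sliceIndicator_succ_succ (m k : ℕ) (P : Finset ℕ → Prop) :
    sliceIndicator (m + 1) (k + 1) P =
      sliceIndicator m (k + 1) P + pushInsert m (sliceIndicator m k fun K => P (insert m K)) := by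
  classical
  ext K
  simp only [sliceIndicator, Pi.add_apply, pushInsert_apply, Set.indicator_apply,
    Set.mem_ofPred_eq, Pi.one_apply]
  by_cases hm : m ∈ K
  · have hK : ¬ K ⊆ range m := fun h => notMem_of_subset_range h hm
    have hiff : (K ⊆ range (m + 1) ∧ #K = k + 1 ∧ P K) ↔
        (K.erase m ⊆ range m ∧ #(K.erase m) = k ∧ P (insert m (K.erase m))) := by
      have : #K = k + 1 ↔ #K - 1 = k := by have := card_pos.2 ⟨m, hm⟩; omega
      rw [range_add_one, subset_insert_iff, card_erase_of_mem hm, insert_erase hm, this]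
    simp only [hiff, hK, hm, false_and, if_false, if_true, zero_add]
  · simp only [range_add_one, subset_insert_iff_of_notMem hm, hm, if_false, add_zero]

end Slices

section Eta

variable {m k : ℕ} {J : Finset ℕ}

lemma eta_eq_zero (h : k < #J) : eta m k J = 0 :=
  sliceIndicator_eq_zero fun _ _ hK hJK => (card_le_card hJK).not_gt (hK ▸ h)

lemma eta_succ_succ (hJ : J ⊆ range m) :
    eta (m + 1) (k + 1) J = eta m (k + 1) J + pushInsert m (eta m k J) := by
  rw [eta, sliceIndicator_succ_succ,
    sliceIndicator_congr (P := fun K => J ⊆ insert m K) (Q := (J ⊆ ·))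
      fun _ _ _ => subset_insert_iff_of_notMem (notMem_of_subset_range hJ)]
  rfl

lemma eta_insert (hJ : J ⊆ range m) :
    eta (m + 1) (k + 1) (insert m J) = pushInsert m (eta m k J) := by
  rw [eta, sliceIndicator_succ_succ,
    sliceIndicator_eq_zero fun _ hK _ h => notMem_of_subset_range hK (h (mem_insert_self m J)),
    zero_add, sliceIndicator_congr (P := fun K => insert m J ⊆ insert m K) (Q := (J ⊆ ·))
      fun _ _ _ => insert_subset_insert_iff (notMem_of_subset_range hJ)]
  rfl

lemma sum_powerset_eta (m k : ℕ) (J : Finset ℕ) :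
    ∑ U ∈ J.powerset, (-1 : ℤ) ^ #U • eta m k U = sliceIndicator m k (Disjoint J) := by
  classical
  ext K
  simp only [Finset.sum_apply, Pi.smul_apply, smul_eq_mul, eta, sliceIndicator,
    Set.indicator_apply, Set.mem_ofPred_eq, Pi.one_apply]
  by_cases hK : K ⊆ range m ∧ #K = k
  · have hsub : {U ∈ J.powerset | U ⊆ K} = (J ∩ K).powerset := by
      ext U
      simp only [mem_filter, mem_powerset, subset_inter_iff]
    simp only [hK, true_and, mul_ite, mul_one, mul_zero]
    rw [← sum_filter, hsub, sum_powerset_neg_one_pow_card]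
    simp only [disjoint_iff_inter_eq_empty]
  · have (p : Prop) : ¬(K ⊆ range m ∧ #K = k ∧ p) := fun h => hK ⟨h.1, h.2.1⟩
    simp only [this, if_false, mul_zero, sum_const_zero]

end Eta

def rowSpan (m k : ℕ) : Submodule ℤ (Finset ℕ → ℤ) :=
  Submodule.span ℤ (eta m k '' {J | J ⊆ range m ∧ IsBallot J})

section RowSpan

variable {m k : ℕ} {J : Finset ℕ}

lemma eta_mem_rowSpan (hJ : J ⊆ range m) (hb : IsBallot J) : eta m k J ∈ rowSpan m k :=
  Submodule.subset_span ⟨J, ⟨hJ, hb⟩, rfl⟩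

lemma pushInsert_eta_mem_rowSpan_of_le (hJ : J ⊆ range m) (hb : IsBallot J)
    (hc : 2 * (#J + 1) ≤ m + 1) : pushInsert m (eta m k J) ∈ rowSpan (m + 1) (k + 1) := by
  rw [← eta_insert hJ]
  exact eta_mem_rowSpan (range_add_one ▸ insert_subset_insert m hJ) (hb.insert hJ hc)

lemma pushInsert_disjoint_mem_rowSpan (hJ : J ⊆ range m) (hb : IsBallot J) (hk : m ≤ #J + k) :
    pushInsert m (sliceIndicator m k (Disjoint J)) ∈ rowSpan (m + 1) (k + 1) := by
  have hzero : sliceIndicator m (k + 1) (Disjoint J) = 0 :=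
    sliceIndicator_eq_zero fun K hK hcard hdisj => by
      have := card_le_card (union_subset hJ hK)
      rw [card_union_of_disjoint hdisj, card_range] at this
      omega
  have hsplit := sliceIndicator_succ_succ m k (Disjoint J)
  rw [hzero, zero_add, sliceIndicator_congr (P := fun K => Disjoint J (insert m K))
    (Q := Disjoint J) fun _ _ _ => by
      rw [disjoint_insert_right, and_iff_right (notMem_of_subset_range hJ)]] at hsplit
  rw [← hsplit, ← sum_powerset_eta]
  refine Submodule.sum_mem _ fun U hU => Submodule.smul_mem _ _ ?_
  rw [mem_powerset] at hU
  exact eta_mem_rowSpan (range_add_one ▸ (hU.trans hJ).trans (subset_insert _ _)) (hb.mono hU)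

lemma pushInsert_eta_mem_rowSpan (hJ : J ⊆ range m) (hb : IsBallot J) :
    pushInsert m (eta m k J) ∈ rowSpan (m + 1) (k + 1) := by
  by_cases hc : 2 * (#J + 1) ≤ m + 1
  · exact pushInsert_eta_mem_rowSpan_of_le hJ hb hc
  by_cases hk : k < #J
  · rw [eta_eq_zero hk, map_zero]
    exact zero_mem _
  have hm : m = 2 * #J := by have := hb.two_mul_card_le hJ; omega
  set S := rowSpan (m + 1) (k + 1)
  have hsum : ∑ U ∈ J.powerset, (-1 : ℤ) ^ #U • pushInsert m (eta m k U) ∈ S := by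
    simp only [← map_smul, ← map_sum, sum_powerset_eta]
    exact pushInsert_disjoint_mem_rowSpan hJ hb (by omega)
  have hproper : ∑ U ∈ J.powerset.erase J, (-1 : ℤ) ^ #U • pushInsert m (eta m k U) ∈ S := by
    refine Submodule.sum_mem _ fun U hU => Submodule.smul_mem _ _ ?_
    have hUJ : U ⊂ J :=
      (mem_powerset.1 (mem_of_mem_erase hU)).ssubset_of_ne (ne_of_mem_erase hU)
    have := card_lt_card hUJ
    exact pushInsert_eta_mem_rowSpan_of_le (hUJ.subset.trans hJ) (hb.mono hUJ.subset) (by omega)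
  rwa [← add_sum_erase _ _ (mem_powerset_self J), Submodule.add_mem_iff_left _ hproper,
    Submodule.smul_mem_iff_of_isUnit _ (isUnit_neg_one.pow _)] at hsum

lemma rowSpan_le_rowSpan_succ : rowSpan m (k + 1) ≤ rowSpan (m + 1) (k + 1) := by
  refine Submodule.span_le.2 ?_
  rintro _ ⟨J, ⟨hJ, hb⟩, rfl⟩
  rw [eq_sub_of_add_eq (eta_succ_succ hJ).symm]
  exact sub_mem (eta_mem_rowSpan (hJ.trans (range_subset_range.2 m.le_succ)) hb)
    (pushInsert_eta_mem_rowSpan hJ hb)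

lemma map_pushInsert_rowSpan_le :
    (rowSpan m k).map (pushInsert m) ≤ rowSpan (m + 1) (k + 1) := by
  rw [rowSpan, Submodule.map_span, Submodule.span_le]
  rintro _ ⟨_, ⟨J, ⟨hJ, hb⟩, rfl⟩, rfl⟩
  exact pushInsert_eta_mem_rowSpan hJ hb

end RowSpan

lemma sliceIndicator_zero_mem_rowSpan (m : ℕ) (P : Finset ℕ → Prop) :
    sliceIndicator m 0 P ∈ rowSpan m 0 := by
  by_cases hP : P ∅
  · rw [sliceIndicator_congr (Q := (∅ ⊆ ·)) fun K _ hK => by simp [card_eq_zero.1 hK, hP]]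
    exact eta_mem_rowSpan (empty_subset _) isBallot_empty
  · rw [sliceIndicator_eq_zero fun K _ hK => card_eq_zero.1 hK ▸ hP]
    exact zero_mem _

lemma sliceIndicator_mem_rowSpan (m k : ℕ) (P : Finset ℕ → Prop) :
    sliceIndicator m k P ∈ rowSpan m k := by
  induction m generalizing k P with
  | zero =>
    rcases k with _ | k
    · exact sliceIndicator_zero_mem_rowSpan 0 P
    rw [sliceIndicator_eq_zero fun K hK hcard _ => by simp [subset_empty.1 hK] at hcard]
    exact zero_mem _
  | succ m ih =>
    rcases k with _ | k
    · exact sliceIndicator_zero_mem_rowSpan (m + 1) P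
    rw [sliceIndicator_succ_succ]
    exact add_mem (rowSpan_le_rowSpan_succ (ih _ _))
      (map_pushInsert_rowSpan_le (Submodule.mem_map_of_mem (ih _ _)))

section Fin

variable (n k : ℕ)

abbrev restrictToFin : (Finset ℕ → ℤ) →ₗ[ℤ] ({K : Finset (Fin n) // #K = k} → ℤ) :=
  LinearMap.funLeft ℤ ℤ fun K => K.1.map Fin.valEmbedding

lemma restrictToFin_eta_mem_span {J : Finset ℕ} (hJ : J ⊆ range n) (hb : IsBallot J) :
    restrictToFin n k (eta n k J) ∈ Submodule.span ℤ (Set.range (bierMatrix n k).row) := by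
  by_cases hk : #J ≤ k
  · obtain ⟨s, rfl⟩ := subset_range_iff_exists_map_valEmbedding.1 hJ
    refine Submodule.subset_span ⟨⟨s, by simpa using hk, (isFullRank_iff_isBallot s).2 hb⟩, ?_⟩
    classical
    ext K
    simp [bierMatrix, eta, sliceIndicator, Set.indicator_apply, K.2,
      subset_range_iff_exists_map_valEmbedding]
  · rw [eta_eq_zero (by omega), map_zero]
    exact zero_mem _

lemma span_bierMatrix_row_eq_top : Submodule.span ℤ (Set.range (bierMatrix n k).row) = ⊤ := by
  have hle : (rowSpan n k).map (restrictToFin n k) ≤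
      Submodule.span ℤ (Set.range (bierMatrix n k).row) := by
    rw [rowSpan, Submodule.map_span, Submodule.span_le]
    rintro _ ⟨_, ⟨J, ⟨hJ, hb⟩, rfl⟩, rfl⟩
    exact restrictToFin_eta_mem_span n k hJ hb
  classical
  rw [eq_top_iff, ← (Pi.basisFun ℤ _).span_eq, Submodule.span_le]
  rintro _ ⟨K₀, rfl⟩
  have hK₀ : Pi.basisFun ℤ _ K₀ =
      restrictToFin n k (sliceIndicator n k (· = K₀.1.map Fin.valEmbedding)) := by
    ext K
    simp [sliceIndicator, Set.indicator_apply, Pi.single_apply, Subtype.ext_iff, K.2,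
      subset_range_iff_exists_map_valEmbedding]
  rw [hK₀]
  exact hle (Submodule.mem_map_of_mem (sliceIndicator_mem_rowSpan _ _ _))

lemma card_fullRank_eq_choose (hk : 2 * k ≤ n) :
    Fintype.card {J : Finset (Fin n) // #J ≤ k ∧ IsFullRank J} = n.choose k := by
  rw [Fintype.card_subtype, ← card_ballotSets hk]
  refine card_nbij (·.map Fin.valEmbedding) (fun s hs => ?_) (fun s _ t _ h => map_injective _ h)
    fun J hJ => ?_
  · rw [mem_coe, mem_filter] at hs
    rw [mem_coe, mem_ballotSets, card_map, ← isFullRank_iff_isBallot,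
      subset_range_iff_exists_map_valEmbedding]
    exact ⟨⟨s, rfl⟩, hs.2.2, hs.2.1⟩
  · obtain ⟨hJ, hb, hk⟩ := mem_ballotSets.1 hJ
    obtain ⟨s, rfl⟩ := subset_range_iff_exists_map_valEmbedding.1 hJ
    rw [card_map] at hk
    exact ⟨s, by simpa [isFullRank_iff_isBallot] using ⟨hk, hb⟩, rfl⟩

end Fin

end Bier

theorem stmt10 (n k : ℕ) (hk : 2 * k ≤ n) :
    ∃ e : {J : Finset (Fin n) // J.card ≤ k ∧ IsFullRank J} ≃ {K : Finset (Fin n) // K.card = k},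
      IsUnit ((bierMatrix n k).submatrix id e).det := by
  have hcard : Fintype.card {J : Finset (Fin n) // J.card ≤ k ∧ IsFullRank J} =
      Fintype.card {K : Finset (Fin n) // K.card = k} := by
    rw [Bier.card_fullRank_eq_choose n k hk, Fintype.card_finset_len, Fintype.card_fin]
  exact ⟨_, (bierMatrix n k).isUnit_det_submatrix_of_span_row_eq_top
    (Bier.span_bierMatrix_row_eq_top n k) (Fintype.equivOfCardEq hcard)⟩
end

section
/- If two integer matrices $A$ and $B$ of the same size satisfy $A \equiv B \pmod{p^s}$ for a prime $p$, then for every $i < s$ the multiplicity of $p^i$ as a $p$-elementary divisor of $A$ equals that of $B$. -/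
/-- The `i`-th leading diagonal entry of a rectangular matrix (zero out of range). -/
def diagEntry {a b : ℕ} (D : Matrix (Fin a) (Fin b) ℤ) (i : ℕ) : ℤ :=
  if h : i < a ∧ i < b then D ⟨i, h.1⟩ ⟨i, h.2⟩ else 0

/-- The multiplicity of the prime power `p^e` as a `p`-elementary divisor of a matrix in
diagonal form: the number of nonzero leading diagonal entries whose `p`-adic valuation
is exactly `e`. -/
def elemDivMult (p e : ℕ) {a b : ℕ} (D : Matrix (Fin a) (Fin b) ℤ) : ℕ :=
  ((Finset.range (min a b)).filter fun i =>
    diagEntry D i ≠ 0 ∧ (p : ℤ) ^ e ∣ diagEntry D i ∧ ¬ (p : ℤ) ^ (e + 1) ∣ diagEntry D i).card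

/-!
For `q = p ^ c`, the finite abelian group `ℤ^a ⧸ (column span of M + q ℤ^a)`, that is
`coker M / q coker M`, depends only on `M` modulo `q` and is unchanged by unimodular equivalence.
For a diagonal matrix with diagonal `d` it is `∏ ℤ ⧸ (gcd (d k) q)`, of order
`∏ gcd (d k) (p ^ c)`. Raising `c` to `c + 1` multiplies this order by
`p ^ #{k | p ^ (c + 1) ∣ d k}`, so the orders for `c ≤ s` determine, for every `j ≤ s`, how many
diagonal entries are divisible by `p ^ j`. The multiplicity of `p ^ i` is the difference of these
counts at `j = i` and `j = i + 1`.
-/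

open Finset

namespace Matrix

variable {R : Type*} [CommRing R] {m n m' n' : Type*}

theorem exists_eq_add_smul_of_dvd_sub {q : R} {A B : Matrix m n R} (h : ∀ x y, q ∣ A x y - B x y) :
    ∃ K : Matrix m n R, A = B + q • K := by
  choose K hK using h
  exact ⟨of K, by ext x y; rw [add_apply, smul_apply, of_apply, smul_eq_mul, ← hK]; ring⟩

variable [Fintype n] [Fintype n']

def colSpanModIdeal (M : Matrix m n R) (I : Ideal R) : Submodule R (m → R) :=
  LinearMap.range M.mulVecLin ⊔ I • ⊤

theorem colSpanModIdeal_add_smul (M K : Matrix m n R) {I : Ideal R} {r : R} (hr : r ∈ I) :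
    colSpanModIdeal (M + r • K) I = colSpanModIdeal M I := by
  suffices key : ∀ (M K : Matrix m n R) (r : R), r ∈ I →
      colSpanModIdeal (M + r • K) I ≤ colSpanModIdeal M I by
    refine le_antisymm (key M K r hr) ?_
    simpa using key (M + r • K) (-K) r hr
  intro M K r hr
  refine sup_le ?_ le_sup_right
  rintro _ ⟨v, rfl⟩
  rw [mulVecLin_apply, add_mulVec, smul_mulVec]
  exact add_mem (Submodule.mem_sup_left ⟨v, rfl⟩)
    (Submodule.mem_sup_right (Submodule.smul_mem_smul hr Submodule.mem_top))

theorem map_colSpanModIdeal {M : Matrix m n R} {M' : Matrix m' n' R} (I : Ideal R)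
    (e : (m → R) ≃ₗ[R] (m' → R)) (f : (n → R) ≃ₗ[R] (n' → R))
    (h : e.toLinearMap ∘ₗ M.mulVecLin = M'.mulVecLin ∘ₗ f.toLinearMap) :
    (colSpanModIdeal M I).map (e : (m → R) →ₗ[R] (m' → R)) = colSpanModIdeal M' I := by
  rw [colSpanModIdeal, colSpanModIdeal, Submodule.map_sup, ← LinearMap.range_comp, h,
    LinearMap.range_comp_of_range_eq_top _ f.range, Submodule.map_smul'', Submodule.map_top,
    LinearEquiv.range]

end Matrix

open Matrix

theorem IntEquiv.card_quotient_colSpanModIdeal_eq {α β γ δ : Type*} [Fintype α] [Fintype β]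
    [Fintype γ] [Fintype δ] [DecidableEq γ] [DecidableEq δ]
    {M : Matrix α β ℤ} {M' : Matrix γ δ ℤ} (h : IntEquiv M M') (I : Ideal ℤ) :
    Nat.card ((α → ℤ) ⧸ colSpanModIdeal M I) = Nat.card ((γ → ℤ) ⧸ colSpanModIdeal M' I) := by
  obtain ⟨er, ec, U, V, hU, hV, rfl⟩ := h
  let e := (LinearEquiv.funCongrLeft ℤ ℤ er.symm).trans
    (U.toLinearEquiv' (U.invertibleOfIsUnitDet hU))
  let f := (LinearEquiv.funCongrLeft ℤ ℤ ec.symm).trans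
    (V.toLinearEquiv' (V.invertibleOfIsUnitDet hV)).symm
  refine Nat.card_congr (Submodule.Quotient.equiv _ _ e (map_colSpanModIdeal I e f ?_)).toEquiv
  refine LinearMap.ext fun v => ?_
  let := V.invertibleOfIsUnitDet hV
  change U *ᵥ ((M *ᵥ v) ∘ er.symm) = (U * M.submatrix er.symm ec.symm * V) *ᵥ (⅟V *ᵥ (v ∘ ec.symm))
  rw [mulVec_mulVec, Matrix.mul_assoc, mul_invOf_self, Matrix.mul_one, ← mulVec_mulVec,
    submatrix_mulVec_equiv]
  simp [Function.comp_def]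

section Diagonal

variable {a b : ℕ} {D : Matrix (Fin a) (Fin b) ℤ}

theorem mulVec_apply_of_diag (hD : ∀ (x : Fin a) (y : Fin b), (x : ℕ) ≠ (y : ℕ) → D x y = 0)
    (u : Fin b → ℤ) (x : Fin a) :
    (D *ᵥ u) x = diagEntry D x * if h : (x : ℕ) < b then u ⟨x, h⟩ else 0 := by
  simp only [mulVec, dotProduct, diagEntry, x.isLt, true_and]
  split_ifs with h
  · refine sum_eq_single_of_mem (⟨x, h⟩ : Fin b) (mem_univ _) fun y _ hy => ?_
    rw [hD x y fun hxy => hy (Fin.ext hxy.symm), zero_mul]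
  · rw [mul_zero]
    exact sum_eq_zero fun y _ => by rw [hD x y fun hxy => h (hxy ▸ y.isLt), zero_mul]

theorem colSpanModIdeal_of_diag (hD : ∀ (x : Fin a) (y : Fin b), (x : ℕ) ≠ (y : ℕ) → D x y = 0)
    (q : ℤ) :
    colSpanModIdeal D (Ideal.span {q}) =
      Submodule.pi Set.univ fun x : Fin a => Ideal.span {diagEntry D x, q} := by
  have mem_smul_top : ∀ v : Fin a → ℤ,
      v ∈ (Ideal.span {q} • ⊤ : Submodule ℤ (Fin a → ℤ)) ↔ ∃ w : Fin a → ℤ, q • w = v := by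
    intro v
    rw [Submodule.ideal_span_singleton_smul, Submodule.mem_smul_pointwise_iff_exists]
    simp only [Submodule.mem_top, true_and]
  apply le_antisymm
  · refine sup_le ?_ fun v hv => ?_
    · rintro _ ⟨u, rfl⟩ x -
      rw [mulVecLin_apply, mulVec_apply_of_diag hD]
      exact Ideal.mul_mem_right _ _ (Ideal.subset_span (by simp))
    · obtain ⟨w, rfl⟩ := (mem_smul_top v).1 hv
      intro x _
      exact Ideal.mul_mem_right _ _ (Ideal.subset_span (by simp))
  · intro v hv
    simp only [Submodule.mem_pi, Set.mem_univ, true_implies, Ideal.mem_span_pair] at hv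
    choose α β hαβ using hv
    let u : Fin b → ℤ := fun y => if h : (y : ℕ) < a then α ⟨y, h⟩ else 0
    refine Submodule.mem_sup.2 ⟨D *ᵥ u, ⟨u, rfl⟩, q • β, (mem_smul_top _).2 ⟨β, rfl⟩, ?_⟩
    ext x
    rw [Pi.add_apply, mulVec_apply_of_diag hD, ← hαβ x, Pi.smul_apply, smul_eq_mul]
    by_cases h : (x : ℕ) < b
    · rw [dif_pos h, show u ⟨x, h⟩ = α x from dif_pos x.isLt]
      ring
    · rw [dif_neg h, diagEntry, dif_neg fun hab => h hab.2]
      ring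

theorem card_quotient_colSpanModIdeal_of_diag
    (hD : ∀ (x : Fin a) (y : Fin b), (x : ℕ) ≠ (y : ℕ) → D x y = 0) (q : ℤ) :
    Nat.card ((Fin a → ℤ) ⧸ colSpanModIdeal D (Ideal.span {q})) =
      ∏ k ∈ range a, Int.gcd (diagEntry D k) q := by
  rw [colSpanModIdeal_of_diag hD, Nat.card_congr (Submodule.quotientPi _).toEquiv, Nat.card_pi,
    ← Fin.prod_univ_eq_prod_range (fun k => Int.gcd (diagEntry D k) q)]
  refine prod_congr rfl fun x _ => ?_
  rw [← span_gcd, ← Int.coe_gcd, Nat.card_congr (Int.quotientSpanNatEquivZMod _).toEquiv,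
    Nat.card_zmod]

end Diagonal

theorem Nat.gcd_prime_pow_succ {p : ℕ} (hp : p.Prime) (n c : ℕ) :
    n.gcd (p ^ (c + 1)) = n.gcd (p ^ c) * if p ^ (c + 1) ∣ n then p else 1 := by
  split_ifs with h
  · rw [Nat.gcd_eq_right h, Nat.gcd_eq_right ((pow_dvd_pow p c.le_succ).trans h), pow_succ]
  · obtain ⟨j, hj, hgcd⟩ := (Nat.dvd_prime_pow hp).1 (Nat.gcd_dvd_right n (p ^ (c + 1)))
    have hjc : j ≤ c := by
      refine Nat.le_of_lt_succ (hj.lt_of_ne fun hjc => h ?_)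
      exact hjc ▸ hgcd ▸ Nat.gcd_dvd_left n _
    rw [mul_one]
    refine Nat.dvd_antisymm (Nat.dvd_gcd (Nat.gcd_dvd_left _ _) ?_)
      (Nat.gcd_dvd_gcd_of_dvd_right _ (pow_dvd_pow p c.le_succ))
    exact hgcd ▸ pow_dvd_pow p hjc

theorem Int.gcd_prime_pow_succ {p : ℕ} (hp : p.Prime) (d : ℤ) (c : ℕ) :
    d.gcd ((p : ℤ) ^ (c + 1)) = d.gcd ((p : ℤ) ^ c) * if (p : ℤ) ^ (c + 1) ∣ d then p else 1 := by
  simp only [Int.gcd_eq_natAbs, Int.natAbs_natCast, ← Int.natCast_pow, Int.natCast_dvd]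
  exact Nat.gcd_prime_pow_succ hp _ c

theorem prod_gcd_prime_pow_succ {ι : Type*} {p : ℕ} (hp : p.Prime) (s : Finset ι) (d : ι → ℤ)
    (c : ℕ) :
    ∏ k ∈ s, (d k).gcd ((p : ℤ) ^ (c + 1)) =
      (∏ k ∈ s, (d k).gcd ((p : ℤ) ^ c)) * p ^ #{k ∈ s | (p : ℤ) ^ (c + 1) ∣ d k} := by
  simp only [Int.gcd_prime_pow_succ hp, prod_mul_distrib, prod_ite, prod_const, one_pow, mul_one]

theorem card_filter_pow_dvd_eq_of_prod_gcd_eq {ι : Type*} {p : ℕ} (hp : p.Prime) {s : Finset ι}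
    {d d' : ι → ℤ} {n : ℕ}
    (h : ∀ c ≤ n, ∏ k ∈ s, (d k).gcd ((p : ℤ) ^ c) = ∏ k ∈ s, (d' k).gcd ((p : ℤ) ^ c)) :
    ∀ j ≤ n, #{k ∈ s | (p : ℤ) ^ j ∣ d k} = #{k ∈ s | (p : ℤ) ^ j ∣ d' k}
  | 0, _ => by simp
  | c + 1, hc => by
    have hpos : 0 < ∏ k ∈ s, (d' k).gcd ((p : ℤ) ^ c) :=
      prod_pos fun k _ => Int.gcd_pos_of_ne_zero_right _ (pow_ne_zero _ (mod_cast hp.ne_zero))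
    have hsucc := h (c + 1) hc
    rw [prod_gcd_prime_pow_succ hp, prod_gcd_prime_pow_succ hp, h c (by omega)] at hsucc
    exact Nat.pow_right_injective hp.two_le (Nat.eq_of_mul_eq_mul_left hpos hsucc)

theorem elemDivMult_add_card_filter (p i : ℕ) {a b : ℕ} (D : Matrix (Fin a) (Fin b) ℤ) :
    elemDivMult p i D + #{k ∈ range a | (p : ℤ) ^ (i + 1) ∣ diagEntry D k} =
      #{k ∈ range a | (p : ℤ) ^ i ∣ diagEntry D k} := by
  have hmult : elemDivMult p i D =
      #{k ∈ range a | (p : ℤ) ^ i ∣ diagEntry D k ∧ ¬ (p : ℤ) ^ (i + 1) ∣ diagEntry D k} := by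
    unfold elemDivMult
    congr 1
    ext k
    simp only [mem_filter, mem_range]
    by_cases hk : k < a ∧ k < b
    · exact ⟨fun ⟨_, _, h⟩ => ⟨hk.1, h⟩,
        fun ⟨_, h⟩ => ⟨by omega, fun h0 => h.2 (h0 ▸ dvd_zero _), h⟩⟩
    · simp [diagEntry, hk]
  have hsucc : ∀ k, (p : ℤ) ^ (i + 1) ∣ diagEntry D k → (p : ℤ) ^ i ∣ diagEntry D k :=
    fun k => (pow_dvd_pow _ i.le_succ).trans
  have hboth : {k ∈ range a | (p : ℤ) ^ i ∣ diagEntry D k ∧ (p : ℤ) ^ (i + 1) ∣ diagEntry D k} =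
      {k ∈ range a | (p : ℤ) ^ (i + 1) ∣ diagEntry D k} :=
    filter_congr fun k _ => ⟨And.right, fun h => ⟨hsucc k h, h⟩⟩
  rw [hmult, ← card_filter_add_card_filter_not (s := {k ∈ range a | (p : ℤ) ^ i ∣ diagEntry D k})
    (fun k => (p : ℤ) ^ (i + 1) ∣ diagEntry D k), filter_filter, filter_filter, hboth, add_comm]

/-- If `A ≡ B (mod p^s)`, then for every `i < s` the multiplicity of `p^i` as a
`p`-elementary divisor of `A` equals that of `B`. -/
theorem stmt18 (a b : ℕ) (A B : Matrix (Fin a) (Fin b) ℤ) (p : ℕ) (hp : p.Prime) (s : ℕ)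
    (hAB : ∀ (x : Fin a) (y : Fin b), (p : ℤ) ^ s ∣ (A x y - B x y))
    (i : ℕ) (hi : i < s)
    (DA : Matrix (Fin a) (Fin b) ℤ)
    (hDAdiag : ∀ (x : Fin a) (y : Fin b), (x : ℕ) ≠ (y : ℕ) → DA x y = 0)
    (hDA : IntEquiv A DA)
    (DB : Matrix (Fin a) (Fin b) ℤ)
    (hDBdiag : ∀ (x : Fin a) (y : Fin b), (x : ℕ) ≠ (y : ℕ) → DB x y = 0)
    (hDB : IntEquiv B DB) :
    elemDivMult p i DA = elemDivMult p i DB := by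
  have hcount : ∀ j ≤ s, #{k ∈ range a | (p : ℤ) ^ j ∣ diagEntry DA k} =
      #{k ∈ range a | (p : ℤ) ^ j ∣ diagEntry DB k} := by
    refine card_filter_pow_dvd_eq_of_prod_gcd_eq hp fun c hc => ?_
    obtain ⟨K, rfl⟩ := exists_eq_add_smul_of_dvd_sub fun x y =>
      (pow_dvd_pow (p : ℤ) hc).trans (hAB x y)
    rw [← card_quotient_colSpanModIdeal_of_diag hDAdiag,
      ← card_quotient_colSpanModIdeal_of_diag hDBdiag, ← hDA.card_quotient_colSpanModIdeal_eq,
      ← hDB.card_quotient_colSpanModIdeal_eq,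
      colSpanModIdeal_add_smul _ _ (Ideal.mem_span_singleton_self _)]
  have hA := elemDivMult_add_card_filter p i DA
  have hB := elemDivMult_add_card_filter p i DB
  have hi₀ := hcount i hi.le
  have hi₁ := hcount (i + 1) hi
  omega
end
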